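/- arXiv:1608.01735 — 6 statements merged into one kernel-verified Lean document; each statement's English description precedes it below -/
import Mathlib

section
/- Let 𝒜 ∈ 𝒯_{3,2} with entries a_{122}=a_{212}=a_{221}=a_{211}=a_{121}=a_{112}=1 and all other entries zero. Then 𝒜 is symmetric, copositive (𝒜x^3 ≥ 0 for all x ≥ 0), and nonsingular over ℝ²₊ (𝒜x^2 ≠ 0 for all x ∈ ℝ²₊ \ {0}), but not strictly copositive (there exists x ∈ ℝ²₊ \ {0} with 𝒜x^3 = 0). -/
open scoped BigOperators
open Metric Filter

noncomputable section

/-- An `m`-th order `n`-dimensional tensor with `m = k+1`, the first index separated: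
`A i f` is the entry `a_{i, f 0, ..., f (k-1)}`. -/
abbrev Tensor (k n : ℕ) : Type := Fin n → (Fin k → Fin n) → ℝ

/-- `𝒜 x^{m-1}`, with `(𝒜 x^{m-1})_i = ∑ a_{i i₂ … i_m} x_{i₂} ⋯ x_{i_m}`. -/
def tApp {k n : ℕ} (A : Tensor k n) (x : EuclideanSpace ℝ (Fin n)) :
    EuclideanSpace ℝ (Fin n) :=
  WithLp.toLp 2 (fun i => ∑ f : Fin k → Fin n, A i f * ∏ j, x (f j))

/-- `𝒜 x^m = xᵀ (𝒜 x^{m-1})`. -/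
def tForm {k n : ℕ} (A : Tensor k n) (x : EuclideanSpace ℝ (Fin n)) : ℝ :=
  ∑ i, x i * tApp A x i

/-- `K` is closed under multiplication by nonnegative scalars. -/
def IsConeSet {n : ℕ} (K : Set (EuclideanSpace ℝ (Fin n))) : Prop :=
  ∀ x ∈ K, ∀ t : ℝ, 0 ≤ t → t • x ∈ K

/-- Frobenius distance between two tensors. -/
def frobDist {k n : ℕ} (A B : Tensor k n) : ℝ :=
  Real.sqrt (∑ i, ∑ f : Fin k → Fin n, (A i f - B i f) ^ 2)

/-- The metric `δ(K₁,K₂) = sup_{‖z‖ ≤ 1} |dist(z,K₁) − dist(z,K₂)|` on cones. -/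
def coneDist {n : ℕ} (K₁ K₂ : Set (EuclideanSpace ℝ (Fin n))) : ℝ :=
  ⨆ z : closedBall (0 : EuclideanSpace ℝ (Fin n)) 1,
    |infDist (z : EuclideanSpace ℝ (Fin n)) K₁ - infDist (z : EuclideanSpace ℝ (Fin n)) K₂|

/-- Solution set of the tensor complementarity problem TCP(K, q, 𝒜). -/
def SOL {k n : ℕ} (K : Set (EuclideanSpace ℝ (Fin n))) (q : EuclideanSpace ℝ (Fin n))
    (A : Tensor k n) : Set (EuclideanSpace ℝ (Fin n)) :=
  {x | x ∈ K ∧ tApp A x + q ∈ ProperCone.innerDual K ∧ inner ℝ x (tApp A x + q) = (0 : ℝ)}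

/-- The nonnegative orthant in `ℝ^n`. -/
def orthant (n : ℕ) : Set (EuclideanSpace ℝ (Fin n)) := {x | ∀ i, 0 ≤ x i}

/-- `Tpos(K, 𝒜) = {𝒜 x^{m-1} : x ∈ K}`. -/
def Tpos {k n : ℕ} (K : Set (EuclideanSpace ℝ (Fin n))) (A : Tensor k n) :
    Set (EuclideanSpace ℝ (Fin n)) := tApp A '' K

/-- The tensor of Example 3.1: all non-constant index triples have entry 1. -/
def exTensor : Tensor 2 2 := fun i f => if i = f 0 ∧ f 0 = f 1 then 0 else 1


lemma cons0 {α : Type*} (a : α) (b : Fin 1 → α) : (Fin.cons a b : Fin 2 → α) 0 = a := rfl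
lemma cons1 {α : Type*} (a b : α) : (Fin.cons a (Fin.cons b finZeroElim) : Fin 2 → α) 1 = b := rfl

lemma tApp_ex (x : EuclideanSpace ℝ (Fin 2)) (i : Fin 2) :
    tApp exTensor x i = if i = 0 then x 1 ^ 2 + 2 * x 0 * x 1 else x 0 ^ 2 + 2 * x 0 * x 1 := by
  rw [tApp, PiLp.toLp_apply, ← (piFinTwoEquiv fun _ => Fin 2).symm.sum_comp]
  fin_cases i <;>
    simp [piFinTwoEquiv, exTensor, Fintype.sum_prod_type, Fin.sum_univ_two,
      Fin.prod_univ_two, cons0, cons1, Fin.cons_zero] <;> ring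

lemma tForm_ex (x : EuclideanSpace ℝ (Fin 2)) :
    tForm exTensor x = 3 * x 0 * x 1 ^ 2 + 3 * x 0 ^ 2 * x 1 := by
  simp [tForm, Fin.sum_univ_two, tApp_ex]
  ring

/-- `exTensor` is symmetric, copositive and ℝ²₊-nonsingular,
but not strictly copositive. -/
theorem stmt2 :
    (∀ i j l : Fin 2, exTensor i ![j, l] = exTensor i ![l, j] ∧
      exTensor i ![j, l] = exTensor j ![i, l]) ∧
    (∀ x : EuclideanSpace ℝ (Fin 2), (∀ i, 0 ≤ x i) → 0 ≤ tForm exTensor x) ∧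
    (∀ x : EuclideanSpace ℝ (Fin 2), (∀ i, 0 ≤ x i) → x ≠ 0 → tApp exTensor x ≠ 0) ∧
    (∃ x : EuclideanSpace ℝ (Fin 2), (∀ i, 0 ≤ x i) ∧ x ≠ 0 ∧ tForm exTensor x = 0) := by

  refine ⟨?_, ?_, ?_, ?_⟩
  · intro i j l
    fin_cases i <;> fin_cases j <;> fin_cases l <;> simp [exTensor]
  · intro x hx
    rw [tForm_ex]
    nlinarith [hx 0, hx 1, mul_nonneg (hx 0) (hx 1)]
  · intro x hx hne h
    have h0 : tApp exTensor x 0 = 0 := by rw [h]; simp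
    have h1 : tApp exTensor x 1 = 0 := by rw [h]; simp
    rw [tApp_ex] at h0 h1
    simp at h0 h1
    apply hne
    ext i
    have hx0 := hx 0
    have hx1 := hx 1
    have e1 : x 1 = 0 := by nlinarith
    have e0 : x 0 = 0 := by nlinarith
    fin_cases i <;> simp [e0, e1]
  · refine ⟨(WithLp.toLp 2 (fun i : Fin 2 => if i = 0 then (1:ℝ) else 0) : EuclideanSpace ℝ (Fin 2)), ?_, ?_, ?_⟩
    · intro i; simp only [PiLp.toLp_apply]; positivity
    · intro h
      have := congrArg (fun v : EuclideanSpace ℝ (Fin 2) => v 0) h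
      simp at this
    · rw [tForm_ex]; norm_num

end
end

section
/- Let 𝒜 ∈ 𝒯_{m,n} and α ⊆ {1,...,n}. If α = ∅ then the complementary tensor C_𝒜(α) equals the unit tensor ℐ. If α ≠ ∅ and the principal sub-tensor 𝒜_α is ℝ^{|α|}₊-nonsingular, then C_𝒜(α) is ℝ^n₊-nonsingular. -/
open scoped BigOperators
open Metric Filter

noncomputable section

/-- The unit tensor `ℐ` (Kronecker symbol entries). -/
def unitTensor (k n : ℕ) : Tensor k n := fun i f => if ∀ j, f j = i then 1 else 0

/-- The complementary tensor `C_𝒜(α)` of Definition 3.5. -/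
def compTensor {k n : ℕ} (A : Tensor k n) (α : Finset (Fin n)) : Tensor k n :=
  fun i f =>
    if ∀ j, f j ∈ α then -A i f
    else if i ∉ α ∧ ∀ j, f j ∉ α then (if ∀ j, f j = i then 1 else 0)
    else 0


lemma tApp_compTensor {k n : ℕ} (hk : 1 ≤ k) (A : Tensor k n) (α : Finset (Fin n))
    (u : EuclideanSpace ℝ (Fin n)) (i : Fin n) :
    tApp (compTensor A α) u i =
      -(tApp A (WithLp.toLp 2 (fun j => if j ∈ α then u j else 0)) i) +
        (if i ∈ α then 0 else u i ^ k) := by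
  classical
  have key : ∀ f : Fin k → Fin n,
      compTensor A α i f * ∏ j, u (f j) =
        (if ∀ j, f j ∈ α then -(A i f * ∏ j, u (f j)) else 0) +
          (if i ∉ α ∧ (∀ j, f j = i) then ∏ j, u (f j) else 0) := by
    intro f
    unfold compTensor
    by_cases h1 : ∀ j, f j ∈ α
    · have h2 : ¬ (i ∉ α ∧ (∀ j, f j = i)) := by
        rintro ⟨hi, hc⟩
        exact hi (hc ⟨0, hk⟩ ▸ h1 ⟨0, hk⟩)
      rw [if_pos h1, if_pos h1, if_neg h2]
      ring
    · by_cases h3 : i ∉ α ∧ ∀ j, f j ∉ α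
      · rw [if_neg h1, if_pos h3, if_neg h1]
        by_cases h4 : ∀ j, f j = i
        · rw [if_pos h4, if_pos ⟨h3.1, h4⟩]
          ring
        · rw [if_neg h4, if_neg (fun h => h4 h.2)]
          ring
      · have h4 : ¬ (i ∉ α ∧ (∀ j, f j = i)) := by
          rintro ⟨hi, hc⟩
          exact h3 ⟨hi, fun j => (hc j) ▸ hi⟩
        rw [if_neg h1, if_neg h3, if_neg h1, if_neg h4]
        ring
  have hprod : ∀ f : Fin k → Fin n,
      (∏ j, (if f j ∈ α then u (f j) else 0)) =
        if ∀ j, f j ∈ α then ∏ j, u (f j) else 0 := by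
    intro f
    by_cases h1 : ∀ j, f j ∈ α
    · rw [if_pos h1]
      exact Finset.prod_congr rfl (fun j _ => by rw [if_pos (h1 j)])
    · rw [if_neg h1]
      push_neg at h1
      obtain ⟨j, hj⟩ := h1
      exact Finset.prod_eq_zero (Finset.mem_univ j) (by rw [if_neg hj])
  have hs1 : tApp A (WithLp.toLp 2 (fun j => if j ∈ α then u j else 0)) i
      = ∑ f : Fin k → Fin n, (if ∀ j, f j ∈ α then A i f * ∏ j, u (f j) else 0) := by
    simp only [tApp]
    refine Finset.sum_congr rfl fun f _ => ?_
    rw [hprod f]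
    split <;> simp
  have hs1' : (∑ f : Fin k → Fin n, if ∀ j, f j ∈ α then -(A i f * ∏ j, u (f j)) else 0)
      = -(tApp A (WithLp.toLp 2 (fun j => if j ∈ α then u j else 0)) i) := by
    rw [hs1, ← Finset.sum_neg_distrib]
    exact Finset.sum_congr rfl fun f _ => by split <;> simp
  have hs2 : (∑ f : Fin k → Fin n, if i ∉ α ∧ (∀ j, f j = i) then ∏ j, u (f j) else 0)
      = if i ∈ α then 0 else u i ^ k := by
    by_cases hi : i ∈ α
    · rw [if_pos hi]
      exact Finset.sum_eq_zero fun f _ => if_neg (fun h => h.1 hi)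
    · rw [if_neg hi]
      have h5 : ∀ f : Fin k → Fin n,
          (if i ∉ α ∧ (∀ j, f j = i) then ∏ j, u (f j) else 0)
            = if f = (fun _ => i) then ∏ j, u (f j) else 0 := by
        intro f
        congr 1
        simp [funext_iff, hi]
      simp only [h5]
      rw [Finset.sum_ite_eq' Finset.univ (fun _ => i) (fun f => ∏ j, u (f j)),
        if_pos (Finset.mem_univ _)]
      simp [Finset.prod_const]
  have main : tApp (compTensor A α) u i
      = (∑ f : Fin k → Fin n, if ∀ j, f j ∈ α then -(A i f * ∏ j, u (f j)) else 0)
        + ∑ f : Fin k → Fin n, (if i ∉ α ∧ (∀ j, f j = i) then ∏ j, u (f j) else 0) := by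
    rw [show tApp (compTensor A α) u i
        = ∑ f : Fin k → Fin n, compTensor A α i f * ∏ j, u (f j) from rfl,
      Finset.sum_congr rfl fun f _ => key f, Finset.sum_add_distrib]
  rw [main, hs1', hs2]

/-- `C_𝒜(∅) = ℐ`; and if `α ≠ ∅` and the principal sub-tensor `𝒜_α` is
`ℝ^{|α|}₊`-nonsingular, then `C_𝒜(α)` is `ℝ^n₊`-nonsingular. -/
theorem stmt8 {k n : ℕ} (hk : 1 ≤ k) (A : Tensor k n) (α : Finset (Fin n)) :
    (α = ∅ → compTensor A α = unitTensor k n) ∧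
    (α.Nonempty →
      (∀ x : EuclideanSpace ℝ (Fin n), (∀ i, i ∉ α → x i = 0) → (∀ i, 0 ≤ x i) →
        x ≠ 0 → ∃ i ∈ α, tApp A x i ≠ 0) →
      ∀ u : EuclideanSpace ℝ (Fin n), (∀ i, 0 ≤ u i) → u ≠ 0 →
        tApp (compTensor A α) u ≠ 0) := by
  classical
  constructor
  · intro h
    subst h
    funext i f
    have h1 : ¬ ∀ j : Fin k, f j ∈ (∅ : Finset (Fin n)) := fun h =>
      absurd (h ⟨0, hk⟩) (Finset.notMem_empty _)
    have h3 : i ∉ (∅ : Finset (Fin n)) ∧ ∀ j, f j ∉ (∅ : Finset (Fin n)) :=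
      ⟨Finset.notMem_empty _, fun j => Finset.notMem_empty _⟩
    unfold compTensor unitTensor
    rw [if_neg h1, if_pos h3]
  · intro hα hA u hu hune
    set x : EuclideanSpace ℝ (Fin n) := WithLp.toLp 2 (fun j => if j ∈ α then u j else 0) with hxdef
    by_cases hx : x = 0
    · obtain ⟨i, hi⟩ : ∃ i, u i ≠ 0 := by
        by_contra h
        push_neg at h
        exact hune (by ext j; exact h j)
      have hiα : i ∉ α := by
        intro hmem
        have := congrFun (congrArg WithLp.ofLp hx) i
        simp only [hxdef] at this
        rw [if_pos hmem] at this
        exact hi this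
      intro h0
      have h1 : tApp (compTensor A α) u i = 0 := by rw [h0]; rfl
      rw [tApp_compTensor hk A α u i, if_neg hiα] at h1
      have hx0 : tApp A x i = 0 := by
        rw [hx]
        refine Finset.sum_eq_zero fun f _ => ?_
        have : (∏ j, (0 : EuclideanSpace ℝ (Fin n)) (f j)) = 0 :=
          Finset.prod_eq_zero (Finset.mem_univ ⟨0, hk⟩) rfl
        rw [this, mul_zero]
      rw [hxdef] at hx0
      rw [hx0, neg_zero, zero_add] at h1
      exact hi (pow_eq_zero_iff (Nat.one_le_iff_ne_zero.mp hk) |>.mp h1)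
    · obtain ⟨i, hiα, hne⟩ := hA x
        (fun i hi => by simp [hxdef, hi])
        (fun i => by by_cases h : i ∈ α <;> simp [hxdef, h, hu i])
        hx
      intro h0
      have h1 : tApp (compTensor A α) u i = 0 := by rw [h0]; rfl
      rw [tApp_compTensor hk A α u i, if_pos hiα, add_zero, neg_eq_zero] at h1
      rw [hxdef] at hne
      exact hne h1


end
end

section
/- For any tensor 𝒜 ∈ 𝒯_{m,n}, the set of solvable q over the nonnegative orthant decomposes as Q(ℝ^n₊, 𝒜) = ⋃_{α ⊆ {1,...,n}} Tpos(ℝ^n₊, C_𝒜(α)), where the union runs over all subsets α of the index set. -/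
open scoped BigOperators
open Metric Filter

noncomputable section

lemma mem_dual_orthant {n : ℕ} {y : EuclideanSpace ℝ (Fin n)} :
    y ∈ ProperCone.innerDual (orthant n) ↔ ∀ i, 0 ≤ y i := by
  rw [ProperCone.mem_innerDual]
  constructor
  · intro h i
    have h1 : (EuclideanSpace.single i (1:ℝ)) ∈ orthant n := by
      intro j
      simp [EuclideanSpace.single_apply]
      split <;> norm_num
    have := h h1
    simpa [EuclideanSpace.inner_single_left] using this
  · intro h x hx
    rw [real_inner_comm]
    simp only [PiLp.inner_apply, RCLike.inner_apply, conj_trivial]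
    exact Finset.sum_nonneg fun i _ => mul_nonneg (hx i) (h i)

lemma tApp_comp {k n : ℕ} (hk : 1 ≤ k) (A : Tensor k n) (α : Finset (Fin n))
    (u : EuclideanSpace ℝ (Fin n)) (i : Fin n) :
    tApp (compTensor A α) u i =
      -(∑ f : Fin k → Fin n, if (∀ j, f j ∈ α) then A i f * ∏ j, u (f j) else 0)
        + (if i ∈ α then 0 else u i ^ k) := by
  have hsplit : ∀ f : Fin k → Fin n,
      compTensor A α i f * ∏ j, u (f j) =
        (if (∀ j, f j ∈ α) then -(A i f * ∏ j, u (f j)) else 0)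
          + (if i ∉ α ∧ ∀ j, f j = i then ∏ j, u (f j) else 0) := by
    intro f
    by_cases h1 : ∀ j, f j ∈ α
    · have h2 : ¬ (i ∉ α ∧ ∀ j, f j = i) := by
        rintro ⟨hi, hf⟩
        exact hi (hf ⟨0, hk⟩ ▸ h1 ⟨0, hk⟩)
      simp [compTensor, h1, h2, neg_mul]
    · by_cases hi : i ∈ α
      · simp [compTensor, h1, hi]
      · by_cases h2 : ∀ j, f j ∉ α
        · have hk0 : ¬ (Fin k → False) := fun h => (h ⟨0, hk⟩).elim
          by_cases h3 : ∀ j, f j = i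
          · simp [compTensor, h1, hi, h2, h3, hk0]
          · simp [compTensor, h1, hi, h2, h3, hk0]
        · have h3 : ¬ ∀ j, f j = i := fun h3 => h2 fun j => h3 j ▸ hi
          simp [compTensor, h1, hi, h2, h3]
  rw [tApp, WithLp.ofLp_toLp]
  rw [Finset.sum_congr rfl fun f _ => hsplit f, Finset.sum_add_distrib]
  congr 1
  · rw [← Finset.sum_neg_distrib]
    exact Finset.sum_congr rfl fun f _ => by split <;> simp
  · by_cases hi : i ∈ α
    · simp [hi]
    · rw [if_neg hi, Finset.sum_eq_single (fun _ => i : Fin k → Fin n)]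
      · rw [if_pos ⟨hi, fun _ => rfl⟩, Finset.prod_const]
        simp
      · intro f _ hne
        rw [if_neg]
        rintro ⟨-, hf⟩
        exact hne (funext hf)
      · simp

/-- `Q(ℝ^n₊, 𝒜) = ⋃_{α ⊆ I_n} Tpos(ℝ^n₊, C_𝒜(α))`. -/
theorem stmt10 {k n : ℕ} (hk : 1 ≤ k) (A : Tensor k n) :
    {q : EuclideanSpace ℝ (Fin n) | (SOL (orthant n) q A).Nonempty} =
      ⋃ α : Finset (Fin n), Tpos (orthant n) (compTensor A α) := by
  have hk0 : k ≠ 0 := by omega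
  ext q
  simp only [Set.mem_setOf_eq, Set.mem_iUnion, Tpos, Set.mem_image]
  constructor
  · rintro ⟨x, hx, hdual, hinner⟩
    set y : EuclideanSpace ℝ (Fin n) := tApp A x + q with hy
    have hynn : ∀ i, 0 ≤ y i := mem_dual_orthant.mp hdual
    have hsum : ∑ i, x i * y i = 0 := by
      rw [real_inner_comm] at hinner
      simpa [PiLp.inner_apply, RCLike.inner_apply, mul_comm] using hinner
    have hcomp : ∀ i, x i * y i = 0 := by
      intro i
      have := (Finset.sum_eq_zero_iff_of_nonneg
        (fun i _ => mul_nonneg (hx i) (hynn i))).mp hsum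
      exact this i (Finset.mem_univ i)
    set α : Finset (Fin n) := Finset.univ.filter (fun i => x i ≠ 0) with hα
    have hmemα : ∀ i, i ∈ α ↔ x i ≠ 0 := by intro i; simp [hα]
    set u : EuclideanSpace ℝ (Fin n) :=
      WithLp.toLp 2 (fun i => if x i ≠ 0 then x i else (y i) ^ ((k:ℝ)⁻¹)) with hu
    refine ⟨α, u, fun i => ?_, ?_⟩
    · by_cases h : x i = 0
      · simp [hu, h, Real.rpow_nonneg (hynn i)]
      · simp [hu, h, hx i]
    · ext i
      rw [tApp_comp hk]
      have hS : (∑ f : Fin k → Fin n,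
          if (∀ j, f j ∈ α) then A i f * ∏ j, u (f j) else 0) = tApp A x i := by
        rw [tApp]
        refine Finset.sum_congr rfl fun f _ => ?_
        by_cases h1 : ∀ j, f j ∈ α
        · rw [if_pos h1]
          congr 1
          exact Finset.prod_congr rfl fun j _ => by
            have := (hmemα (f j)).mp (h1 j)
            simp [hu, this]
        · rw [if_neg h1]
          push_neg at h1
          obtain ⟨j0, hj0⟩ := h1
          have hx0 : x (f j0) = 0 := by
            by_contra h
            exact hj0 ((hmemα (f j0)).mpr h)
          rw [Finset.prod_eq_zero (Finset.mem_univ j0) hx0, mul_zero]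
      rw [hS]
      by_cases hiα : i ∈ α
      · have hyi : y i = 0 := by
          have hxi := (hmemα i).mp hiα
          rcases mul_eq_zero.mp (hcomp i) with h | h
          · exact absurd h hxi
          · exact h
        have : y i = tApp A x i + q i := rfl
        rw [if_pos hiα]
        linarith [this ▸ hyi]
      · have hxi : x i = 0 := by
          by_contra h; exact hiα ((hmemα i).mpr h)
        have hui : u i ^ k = y i := by
          simp only [hu, hxi, ne_eq, not_true_eq_false, if_false, not_not]
          exact Real.rpow_inv_natCast_pow (hynn i) hk0
        have : y i = tApp A x i + q i := rfl
        rw [if_neg hiα, hui]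
        linarith [this]
  · rintro ⟨α, u, hu, rfl⟩
    set x : EuclideanSpace ℝ (Fin n) := WithLp.toLp 2 (fun i => if i ∈ α then u i else 0) with hxdef
    have hS : ∀ i, tApp A x i = ∑ f : Fin k → Fin n,
        if (∀ j, f j ∈ α) then A i f * ∏ j, u (f j) else 0 := by
      intro i
      rw [tApp]
      refine Finset.sum_congr rfl fun f _ => ?_
      by_cases h1 : ∀ j, f j ∈ α
      · rw [if_pos h1]
        congr 1
        exact Finset.prod_congr rfl fun j _ => by simp [hxdef, h1 j]
      · rw [if_neg h1]
        push_neg at h1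
        obtain ⟨j0, hj0⟩ := h1
        have hx0 : x (f j0) = 0 := by simp [hxdef, hj0]
        rw [Finset.prod_eq_zero (Finset.mem_univ j0) hx0, mul_zero]
    have hyi : ∀ i, (tApp A x + tApp (compTensor A α) u) i =
        if i ∈ α then 0 else u i ^ k := by
      intro i
      have : (tApp A x + tApp (compTensor A α) u) i
          = tApp A x i + tApp (compTensor A α) u i := rfl
      rw [this, tApp_comp hk, hS i]
      ring
    refine ⟨x, fun i => ?_, mem_dual_orthant.mpr fun i => ?_, ?_⟩
    · by_cases h : i ∈ α <;> simp [hxdef, h, hu i]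
    · rw [hyi i]
      by_cases h : i ∈ α
      · simp [h]
      · simpa [h] using pow_nonneg (hu i) k
    · rw [real_inner_comm]
      simp only [PiLp.inner_apply, RCLike.inner_apply, conj_trivial]
      refine Finset.sum_eq_zero fun i _ => ?_
      rw [hyi i]
      by_cases h : i ∈ α
      · simp [h]
      · simp [hxdef, h]

end
end

section
/- If 𝒜 ∈ 𝒯_{m,n} is such that Tpos(ℝ^n₊, C_𝒜(α)) is closed for every nonempty α ⊆ {1,...,n}, then Q(ℝ^n₊, 𝒜) = {q : TCP(ℝ^n₊, q, 𝒜) is solvable} is a closed cone. -/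
open scoped BigOperators
open Metric Filter

noncomputable section

lemma orthant_isClosed (n : ℕ) : IsClosed (orthant n) := by
  have h : orthant n = ⋂ i, {x : EuclideanSpace ℝ (Fin n) | 0 ≤ x i} := by
    ext x; simp [orthant, Set.mem_iInter]
  rw [h]
  exact isClosed_iInter fun i =>
    isClosed_le continuous_const (EuclideanSpace.proj i).continuous

lemma mem_orthant_dual {n : ℕ} {w : EuclideanSpace ℝ (Fin n)} :
    w ∈ ProperCone.innerDual (orthant n) ↔ ∀ i, 0 ≤ w i := by
  rw [ProperCone.mem_innerDual]
  constructor
  · intro h i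
    have := h (x := EuclideanSpace.single i (1 : ℝ)) (fun j => by
      by_cases hj : j = i <;> simp [EuclideanSpace.single_apply, hj])
    simpa [EuclideanSpace.inner_single_left] using this
  · intro h x hx
    rw [PiLp.inner_apply]
    exact Finset.sum_nonneg fun i _ => by
      simpa using mul_nonneg (h i) (hx i)

def restr {n : ℕ} (α : Finset (Fin n)) (u : EuclideanSpace ℝ (Fin n)) :
    EuclideanSpace ℝ (Fin n) := WithLp.toLp 2 (fun i => if i ∈ α then u i else 0)

lemma key {k n : ℕ} (hk : 1 ≤ k) (A : Tensor k n) (α : Finset (Fin n))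
    (u : EuclideanSpace ℝ (Fin n)) (i : Fin n) :
    tApp (compTensor A α) u i
      = -(tApp A (restr α u) i) + (if i ∈ α then 0 else u i ^ k) := by
  have hsplit : ∀ f : Fin k → Fin n,
      compTensor A α i f * ∏ j, u (f j)
      = -(A i f * ∏ j, restr α u (f j))
        + (if i ∉ α ∧ f = (fun _ => i) then u i ^ k else 0) := by
    intro f
    unfold compTensor
    by_cases hf : ∀ j, f j ∈ α
    · have h1 : ∀ j, restr α u (f j) = u (f j) := fun j => if_pos (hf j)
      have hne : ¬ (i ∉ α ∧ f = fun _ => i) := by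
        rintro ⟨hi, rfl⟩; exact hi (hf ⟨0, hk⟩)
      simp only [if_pos hf, if_neg hne, add_zero]
      rw [Finset.prod_congr rfl fun j _ => h1 j]
      ring
    · have hz : ∏ j, restr α u (f j) = 0 := by
        push_neg at hf
        obtain ⟨j, hj⟩ := hf
        exact Finset.prod_eq_zero (Finset.mem_univ j) (if_neg hj)
      rw [if_neg hf, hz, mul_zero, neg_zero, zero_add]
      by_cases hi : i ∉ α ∧ ∀ j, f j ∉ α
      · rw [if_pos hi]
        by_cases hfi : ∀ j, f j = i
        · have hfe : f = fun _ => i := funext hfi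
          rw [if_pos hfi, if_pos ⟨hi.1, hfe⟩, one_mul, hfe]
          simp [Finset.prod_const]
        · have hne : ¬ (i ∉ α ∧ f = fun _ => i) := by
            rintro ⟨_, rfl⟩; exact hfi fun _ => rfl
          rw [if_neg hfi, if_neg hne, zero_mul]
      · have hne : ¬ (i ∉ α ∧ f = fun _ => i) := by
          rintro ⟨h1, rfl⟩
          exact hi ⟨h1, fun j => h1⟩
        rw [if_neg hi, if_neg hne, zero_mul]
  show (∑ f : Fin k → Fin n, compTensor A α i f * ∏ j, u (f j)) = _
  rw [Finset.sum_congr rfl fun f _ => hsplit f, Finset.sum_add_distrib]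
  congr 1
  · rw [Finset.sum_neg_distrib]
    rfl
  · by_cases hi : i ∈ α
    · simp [hi]
    · simp only [hi, not_false_iff, true_and, if_neg hi]
      rw [Finset.sum_ite_eq' Finset.univ (fun _ => i) (fun _ => u i ^ k)]
      simp

lemma sol_to_tpos {k n : ℕ} (hk : 1 ≤ k) (A : Tensor k n) (q : EuclideanSpace ℝ (Fin n))
    (h : (SOL (orthant n) q A).Nonempty) :
    ∃ α : Finset (Fin n), q ∈ Tpos (orthant n) (compTensor A α) := by
  obtain ⟨x, hxK, hwK, hcomp⟩ := h
  set w : EuclideanSpace ℝ (Fin n) := tApp A x + q with hw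
  have hw0 : ∀ i, 0 ≤ w i := mem_orthant_dual.mp hwK
  have hqw : ∀ i, q i = w i - tApp A x i := by
    intro i
    have : w i = tApp A x i + q i := rfl
    linarith
  have hxw : ∀ i, x i * w i = 0 := by
    have h0 : (∑ i, x i * w i) = 0 := by
      have := hcomp
      rw [PiLp.inner_apply] at this
      simpa [mul_comm] using this
    intro i
    exact (Finset.sum_eq_zero_iff_of_nonneg fun i _ =>
      mul_nonneg (hxK i) (hw0 i)).mp h0 i (Finset.mem_univ i)
  set α : Finset (Fin n) := Finset.univ.filter (fun i => x i ≠ 0) with hα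
  set u : EuclideanSpace ℝ (Fin n) :=
    WithLp.toLp 2 (fun i => if i ∈ α then x i else w i ^ ((k : ℝ)⁻¹)) with hu
  have hru : restr α u = x := by
    ext i
    by_cases hi : i ∈ α
    · simp [restr, hu, hi]
    · have hx0 : x i = 0 := by
        by_contra hx
        exact hi (by simp [hα, hx])
      simp [restr, hi, hx0]
  refine ⟨α, u, fun i => ?_, ?_⟩
  · by_cases hi : i ∈ α
    · simpa [hu, hi] using hxK i
    · simpa [hu, hi] using Real.rpow_nonneg (hw0 i) _
  · ext i
    rw [key hk A α u i, hru, hqw i]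
    by_cases hi : i ∈ α
    · have hx : x i ≠ 0 := by
        have := hi; rw [hα, Finset.mem_filter] at this; exact this.2
      have hwi : w i = 0 := by
        rcases mul_eq_zero.mp (hxw i) with h | h
        · exact absurd h hx
        · exact h
      simp [hi, hwi]
    · have : u i ^ k = w i := by
        simp only [hu, if_neg hi]
        exact Real.rpow_inv_natCast_pow (hw0 i) (by omega)
      rw [if_neg hi, this]
      ring

lemma tpos_to_sol {k n : ℕ} (hk : 1 ≤ k) (A : Tensor k n) (q : EuclideanSpace ℝ (Fin n))
    (α : Finset (Fin n)) (h : q ∈ Tpos (orthant n) (compTensor A α)) :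
    (SOL (orthant n) q A).Nonempty := by
  obtain ⟨u, hu, hq⟩ := h
  have hkey : ∀ i, (tApp A (restr α u) + q) i = if i ∈ α then 0 else u i ^ k := by
    intro i
    have : q i = tApp (compTensor A α) u i := by rw [hq]
    have h2 : q i = -(tApp A (restr α u) i) + (if i ∈ α then 0 else u i ^ k) := by
      rw [this, key hk A α u i]
    show tApp A (restr α u) i + q i = _
    rw [h2]; ring
  refine ⟨restr α u, fun i => ?_, ?_, ?_⟩
  · by_cases hi : i ∈ α
    · simpa [restr, hi] using hu i
    · simp [restr, hi]
  · rw [mem_orthant_dual]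
    intro i
    rw [hkey i]
    by_cases hi : i ∈ α
    · simp [hi]
    · simpa [hi] using pow_nonneg (hu i) k
  · rw [PiLp.inner_apply]
    apply Finset.sum_eq_zero
    intro i _
    rw [hkey i]
    by_cases hi : i ∈ α <;> simp [restr, hi]

lemma tpos_empty {k n : ℕ} (hk : 1 ≤ k) (A : Tensor k n) :
    Tpos (orthant n) (compTensor A (∅ : Finset (Fin n))) = orthant n := by
  have happ : ∀ u : EuclideanSpace ℝ (Fin n), ∀ i,
      tApp (compTensor A (∅ : Finset (Fin n))) u i = u i ^ k := by
    intro u i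
    rw [key hk A ∅ u i]
    have h0 : tApp A (restr (∅ : Finset (Fin n)) u) i = 0 := by
      apply Finset.sum_eq_zero
      intro f _
      have : restr (∅ : Finset (Fin n)) u (f ⟨0, hk⟩) = 0 := by simp [restr]
      rw [Finset.prod_eq_zero (Finset.mem_univ (⟨0, hk⟩ : Fin k)) this, mul_zero]
    rw [h0]
    simp
  ext v
  constructor
  · rintro ⟨u, hu, rfl⟩ i
    rw [happ u i]
    exact pow_nonneg (hu i) k
  · intro hv
    refine ⟨WithLp.toLp 2 (fun i => v i ^ ((k : ℝ)⁻¹)), fun i => Real.rpow_nonneg (hv i) _, ?_⟩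
    ext i
    rw [happ _ i]
    exact Real.rpow_inv_natCast_pow (hv i) (by omega)

lemma tApp_smul {k n : ℕ} (A : Tensor k n) (t : ℝ) (x : EuclideanSpace ℝ (Fin n)) :
    tApp A (t • x) = t ^ k • tApp A x := by
  ext i
  show (∑ f : Fin k → Fin n, A i f * ∏ j, (t • x) (f j))
      = t ^ k * ∑ f : Fin k → Fin n, A i f * ∏ j, x (f j)
  rw [Finset.mul_sum]
  apply Finset.sum_congr rfl
  intro f _
  have : ∀ j : Fin k, (t • x) (f j) = t * x (f j) := fun j => rfl
  rw [Finset.prod_congr rfl fun j _ => this j, Finset.prod_mul_distrib,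
    Finset.prod_const]
  simp
  ring

/-- if each `Tpos(ℝ^n₊, C_𝒜(α))` (α nonempty) is closed, then
`Q(ℝ^n₊, 𝒜)` is a closed cone. -/
theorem stmt11 {k n : ℕ} (hk : 1 ≤ k) (A : Tensor k n)
    (hcl : ∀ α : Finset (Fin n), α.Nonempty →
      IsClosed (Tpos (orthant n) (compTensor A α))) :
    IsClosed {q : EuclideanSpace ℝ (Fin n) | (SOL (orthant n) q A).Nonempty} ∧
    ∀ q : EuclideanSpace ℝ (Fin n), (SOL (orthant n) q A).Nonempty →
      ∀ t : ℝ, 0 ≤ t → (SOL (orthant n) (t • q) A).Nonempty := by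
  constructor
  · have hQ : {q : EuclideanSpace ℝ (Fin n) | (SOL (orthant n) q A).Nonempty}
        = ⋃ α : Finset (Fin n), Tpos (orthant n) (compTensor A α) := by
      ext q
      simp only [Set.mem_iUnion, Set.mem_setOf_eq]
      exact ⟨sol_to_tpos hk A q, fun ⟨α, h⟩ => tpos_to_sol hk A q α h⟩
    rw [hQ]
    refine isClosed_iUnion_of_finite fun α => ?_
    rcases α.eq_empty_or_nonempty with rfl | hne
    · rw [tpos_empty hk A]; exact orthant_isClosed n
    · exact hcl α hne
  · intro q hq t ht
    obtain ⟨x, hxK, hwK, hcomp⟩ := hq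
    have hw0 : ∀ i, 0 ≤ (tApp A x + q) i := mem_orthant_dual.mp hwK
    have hxw : ∀ i, x i * (tApp A x + q) i = 0 := by
      have h0 : (∑ i, x i * (tApp A x + q) i) = 0 := by
        rw [PiLp.inner_apply] at hcomp
        simpa [mul_comm] using hcomp
      intro i
      exact (Finset.sum_eq_zero_iff_of_nonneg fun i _ =>
        mul_nonneg (hxK i) (hw0 i)).mp h0 i (Finset.mem_univ i)
    set s : ℝ := t ^ ((k : ℝ)⁻¹) with hs
    have hs0 : 0 ≤ s := Real.rpow_nonneg ht _
    have hsk : s ^ k = t := Real.rpow_inv_natCast_pow ht (by omega)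
    have happ : ∀ i, (tApp A (s • x) + t • q) i = t * ((tApp A x + q) i) := by
      intro i
      show tApp A (s • x) i + (t • q) i = t * (tApp A x i + q i)
      rw [tApp_smul]
      show s ^ k * tApp A x i + t * q i = _
      rw [hsk]; ring
    refine ⟨s • x, fun i => ?_, ?_, ?_⟩
    · show 0 ≤ s * x i
      exact mul_nonneg hs0 (hxK i)
    · rw [mem_orthant_dual]
      intro i
      rw [happ i]
      exact mul_nonneg ht (hw0 i)
    · rw [PiLp.inner_apply]
      apply Finset.sum_eq_zero
      intro i _
      have h1 : (s • x) i = s * x i := rfl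
      simp only [happ i, h1, RCLike.inner_apply', starRingEnd_apply, star_trivial]
      calc s * x i * (t * (tApp A x + q) i)
          = s * t * (x i * (tApp A x + q) i) := by ring
        _ = 0 := by rw [hxw i, mul_zero]

end
end

section
/- Second-order sufficient condition for local uniqueness: let K be a closed convex cone, 𝒜 ∈ 𝒯_{m,n} sub-symmetric with respect to indices {i₂,...,i_m}, and x̄ ∈ SOL(K, q, 𝒜). If Σ_{i1,...,im} a_{i1 i2 i3...im} v_{i1} v_{i2} x̄_{i3}···x̄_{im} > 0 for every v ∈ 𝒯(x̄, K) ∩ 𝕊(x̄) (with v ≠ 0 in that intersection), then x̄ is a locally unique solution: there is a neighborhood V of x̄ with SOL(K, q, 𝒜) ∩ V = {x̄}. -/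
open scoped BigOperators
open Metric Filter

noncomputable section

/-- The tangent cone of `K` at `x̄`: limits of `(x_k − x̄)/τ_k` with `x_k ∈ K`,
`x_k → x̄`, `τ_k > 0`, `τ_k → 0`. -/
def tangentConeOf {n : ℕ} (K : Set (EuclideanSpace ℝ (Fin n)))
    (xb : EuclideanSpace ℝ (Fin n)) : Set (EuclideanSpace ℝ (Fin n)) :=
  {v | ∃ (x : ℕ → EuclideanSpace ℝ (Fin n)) (τ : ℕ → ℝ),
    (∀ l, x l ∈ K) ∧ (∀ l, 0 < τ l) ∧
    Filter.Tendsto x Filter.atTop (nhds xb) ∧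
    Filter.Tendsto τ Filter.atTop (nhds 0) ∧
    Filter.Tendsto (fun l => (τ l)⁻¹ • (x l - xb)) Filter.atTop (nhds v)}

/-- `𝒜` is sub-symmetric with respect to its last `m−1` indices. -/
def SubSymmetric {k n : ℕ} (A : Tensor k n) : Prop :=
  ∀ (i : Fin n) (f : Fin k → Fin n) (σ : Equiv.Perm (Fin k)), A i (f ∘ σ) = A i f

/-- `∑ a_{i₁ i₂ i₃ … i_m} v_{i₁} v_{i₂} x̄_{i₃} ⋯ x̄_{i_m} = vᵀ(𝒜 x̄^{m-2})v`. -/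
def quadForm {k n : ℕ} (A : Tensor (k + 1) n) (x v : EuclideanSpace ℝ (Fin n)) : ℝ :=
  ∑ i, ∑ f : Fin (k + 1) → Fin n, A i f * (v i * v (f 0) * ∏ j : Fin k, x (f j.succ))

section Aux
open Finset

lemma aux_prod_tendsto {M : ℕ} (a : Fin M → ℝ) (t : ℕ → ℝ) (b : ℕ → Fin M → ℝ)
    (bb : Fin M → ℝ) (ht : ∀ l, t l ≠ 0) (ht0 : Tendsto t atTop (nhds 0))
    (hb : Tendsto b atTop (nhds bb)) :
    Tendsto (fun l => (t l)⁻¹ * ((∏ j, (a j + t l * b l j)) - ∏ j, a j)) atTop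
      (nhds (∑ j, (∏ j' ∈ Finset.univ.erase j, a j') * bb j)) := by
  classical
  set L : (Fin M → ℝ) →L[ℝ] ℝ :=
    ∑ j, (∏ j' ∈ Finset.univ.erase j, a j') • ContinuousLinearMap.proj j with hL
  have hP : HasStrictFDerivAt (fun u : Fin M → ℝ => ∏ j, u j) L a :=
    hasStrictFDerivAt_finset_prod
  have hq1 : Tendsto (fun l => (fun j => a j + t l * b l j)) atTop (nhds a) := by
    rw [tendsto_pi_nhds]
    intro j
    have hbj : Tendsto (fun l => b l j) atTop (nhds (bb j)) :=
      (continuous_apply j).continuousAt.tendsto.comp hb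
    have h2 : Tendsto (fun l => a j + t l * b l j) atTop (nhds (a j + 0 * bb j)) :=
      tendsto_const_nhds.add (ht0.mul hbj)
    simpa using h2
  have hq : Tendsto (fun l => ((fun j => a j + t l * b l j), a)) atTop (nhds (a, a)) :=
    hq1.prodMk_nhds tendsto_const_nhds
  have hsub : ∀ l, ((fun j => a j + t l * b l j) - a : Fin M → ℝ)
      = t l • b l := by
    intro l; funext j; simp [mul_comm]
  have hE := (hP.isLittleO.comp_tendsto hq)
  have hE' : (fun l => (∏ j, (a j + t l * b l j)) - (∏ j, a j) - L (t l • b l))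
      =o[atTop] fun l => t l • b l := by
    refine hE.congr' (Eventually.of_forall fun l => ?_) (Eventually.of_forall fun l => ?_)
    · show (∏ j, (a j + t l * b l j)) - (∏ j, a j)
        - L ((fun j => a j + t l * b l j) - a) = _
      rw [hsub l]
    · show ((fun j => a j + t l * b l j) - a : Fin M → ℝ) = _
      rw [hsub l]
  have hO : (fun l => (t l • b l : Fin M → ℝ)) =O[atTop] t := by
    have hbnorm : Tendsto (fun l => ‖b l‖) atTop (nhds ‖bb‖) := hb.norm
    have hev : ∀ᶠ l in atTop, ‖b l‖ ≤ ‖bb‖ + 1 := by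
      have : Set.Iio (‖bb‖ + 1) ∈ nhds ‖bb‖ := Iio_mem_nhds (by linarith)
      filter_upwards [hbnorm this] with l hl using le_of_lt hl
    refine Asymptotics.IsBigO.of_bound (‖bb‖ + 1) ?_
    filter_upwards [hev] with l hl
    rw [norm_smul]
    calc ‖t l‖ * ‖b l‖ ≤ ‖t l‖ * (‖bb‖ + 1) := by
          exact mul_le_mul_of_nonneg_left hl (norm_nonneg _)
      _ = (‖bb‖ + 1) * ‖t l‖ := by ring
  have hEo : (fun l => (∏ j, (a j + t l * b l j)) - (∏ j, a j) - L (t l • b l))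
      =o[atTop] t := hE'.trans_isBigO hO
  have hdiv : Tendsto (fun l =>
      ((∏ j, (a j + t l * b l j)) - (∏ j, a j) - L (t l • b l)) / t l) atTop (nhds 0) :=
    hEo.tendsto_div_nhds_zero
  have hLb : Tendsto (fun l => L (b l)) atTop (nhds (L bb)) :=
    (L.continuous.tendsto bb).comp hb
  have heq : (fun l => (t l)⁻¹ * ((∏ j, (a j + t l * b l j)) - ∏ j, a j))
      = fun l => ((∏ j, (a j + t l * b l j)) - (∏ j, a j) - L (t l • b l)) / t l + L (b l) := by
    funext l
    have hLt : L (t l • b l) = t l * L (b l) := by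
      rw [map_smul]; simp
    have h1 : ((∏ j, (a j + t l * b l j)) - (∏ j, a j) - L (t l • b l)) / t l
        = (t l)⁻¹ * ((∏ j, (a j + t l * b l j)) - (∏ j, a j)) - L (b l) := by
      rw [hLt, div_eq_inv_mul, mul_sub, inv_mul_cancel_left₀ (ht l)]
    rw [h1]; ring
  rw [heq]
  have hLbb : L bb = ∑ j, (∏ j' ∈ Finset.univ.erase j, a j') * bb j := by
    simp [hL, ContinuousLinearMap.sum_apply]
  rw [← hLbb, ← zero_add (L bb)]
  exact hdiv.add hLb

lemma aux_erase0 {k : ℕ} (g : Fin (k + 1) → ℝ) :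
    ∏ j' ∈ Finset.univ.erase (0 : Fin (k + 1)), g j' = ∏ jj : Fin k, g jj.succ := by
  classical
  have h : Finset.univ.erase (0 : Fin (k + 1)) = Finset.Ioi 0 := by
    ext a; simp [Finset.mem_erase, Finset.mem_Ioi, Fin.pos_iff_ne_zero]
  rw [h, Fin.Ioi_zero_eq_map, Finset.prod_map]
  rfl

lemma aux_swap {k n : ℕ} (A : Tensor (k + 1) n) (hsym : SubSymmetric A)
    (x v : EuclideanSpace ℝ (Fin n)) (i : Fin n) (j : Fin (k + 1)) :
    ∑ f : Fin (k + 1) → Fin n, A i f * v (f j) * ∏ j' ∈ Finset.univ.erase j, x (f j')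
    = ∑ f : Fin (k + 1) → Fin n, A i f * v (f 0) * ∏ jj : Fin k, x (f jj.succ) := by
  classical
  set σ : Equiv.Perm (Fin (k + 1)) := Equiv.swap 0 j with hσ
  have hinv : ∀ f : Fin (k + 1) → Fin n, (f ∘ σ) ∘ σ = f := by
    intro f; funext a; simp [hσ, Function.comp, Equiv.swap_apply_self]
  set e : (Fin (k + 1) → Fin n) ≃ (Fin (k + 1) → Fin n) :=
    ⟨fun f => f ∘ σ, fun f => f ∘ σ, hinv, hinv⟩ with he
  refine (Fintype.sum_equiv e _ _ fun f => ?_).symm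
  have hA : A i (f ∘ σ) = A i f := hsym i f σ
  have hj : (f ∘ σ) j = f 0 := by simp [hσ, Function.comp, Equiv.swap_apply_right]
  have hprod : ∏ j' ∈ Finset.univ.erase j, x ((f ∘ σ) j')
      = ∏ jj : Fin k, x (f jj.succ) := by
    rw [← aux_erase0 (fun j' => x (f j'))]
    refine Finset.prod_nbij' (fun a => σ a) (fun b => σ b) ?_ ?_ ?_ ?_ ?_
    · intro a ha
      simp only [Finset.mem_erase, Finset.mem_univ, and_true] at ha ⊢
      intro h0
      apply ha
      have : σ a = σ j := by rw [h0]; simp [hσ, Equiv.swap_apply_right]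
      exact σ.injective this
    · intro b hb
      simp only [Finset.mem_erase, Finset.mem_univ, and_true] at hb ⊢
      intro h0
      apply hb
      have : σ b = σ 0 := by rw [h0]; simp [hσ, Equiv.swap_apply_right]
      exact σ.injective this
    · intro a _; simp [Equiv.swap_apply_self, hσ]
    · intro b _; simp [Equiv.swap_apply_self, hσ]
    · intro a _; rfl
  show A i f * v (f 0) * (∏ jj : Fin k, x (f jj.succ))
      = A i (f ∘ ⇑σ) * v ((f ∘ ⇑σ) j) * ∏ j' ∈ Finset.univ.erase j, x ((f ∘ ⇑σ) j')
  rw [hA, hj, hprod]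

end Aux

/-- second-order sufficient condition for local uniqueness of a solution. -/
theorem stmt18 {k n : ℕ} (K : Set (EuclideanSpace ℝ (Fin n)))
    (hKcl : IsClosed K) (hKconv : Convex ℝ K) (hKcone : IsConeSet K)
    (q : EuclideanSpace ℝ (Fin n)) (A : Tensor (k + 1) n)
    (hsym : SubSymmetric A)
    (xb : EuclideanSpace ℝ (Fin n)) (hxb : xb ∈ SOL K q A)
    (hsoc : ∀ v ∈ tangentConeOf K xb,
      inner ℝ v (tApp A xb + q) = (0 : ℝ) → v ≠ 0 → 0 < quadForm A xb v) :
    ∃ V ∈ nhds xb, SOL K q A ∩ V = {xb} := by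
  classical
  obtain ⟨hxbK, hdual, hcomp⟩ := hxb
  by_contra hcon
  push_neg at hcon
  -- extract a sequence of solutions converging to xb, distinct from xb
  have hexists : ∀ l : ℕ, ∃ x, x ∈ SOL K q A ∧ dist x xb < 1 / (l + 1) ∧ x ≠ xb := by
    intro l
    have hpos : (0 : ℝ) < 1 / (l + 1) := by positivity
    have hV : Metric.ball xb (1 / (l + 1)) ∈ nhds xb := ball_mem_nhds _ hpos
    have hne := hcon _ hV
    by_contra hall
    push_neg at hall
    apply hne
    apply Set.eq_singleton_iff_unique_mem.2
    refine ⟨⟨⟨hxbK, hdual, hcomp⟩, mem_ball_self hpos⟩, ?_⟩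
    intro x hx
    exact hall x hx.1 (by simpa [Metric.mem_ball] using hx.2)
  choose X hX using hexists
  have hXsol : ∀ l, X l ∈ SOL K q A := fun l => (hX l).1
  have hXK : ∀ l, X l ∈ K := fun l => (hXsol l).1
  set τ : ℕ → ℝ := fun l => ‖X l - xb‖ with hτdef
  have hτpos : ∀ l, 0 < τ l := fun l =>
    norm_pos_iff.mpr (sub_ne_zero.mpr (hX l).2.2)
  have hτ0 : Tendsto τ atTop (nhds 0) := by
    apply squeeze_zero (fun l => (hτpos l).le) (fun l => ?_)
      tendsto_one_div_add_atTop_nhds_zero_nat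
    have := (hX l).2.1
    rw [dist_eq_norm] at this
    exact this.le
  have hXlim : Tendsto X atTop (nhds xb) := by
    rw [tendsto_iff_dist_tendsto_zero]
    simpa [dist_eq_norm] using hτ0
  set V : ℕ → EuclideanSpace ℝ (Fin n) := fun l => (τ l)⁻¹ • (X l - xb) with hVdef
  have hVsph : ∀ l, V l ∈ sphere (0 : EuclideanSpace ℝ (Fin n)) 1 := by
    intro l
    rw [mem_sphere_zero_iff_norm, hVdef, norm_smul, norm_inv, norm_norm]
    exact inv_mul_cancel₀ (hτpos l).ne'
  obtain ⟨w, hwmem, φ, hφ, hwlim⟩ :=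
    (isCompact_sphere (0 : EuclideanSpace ℝ (Fin n)) 1).tendsto_subseq hVsph
  set y : ℕ → EuclideanSpace ℝ (Fin n) := fun l => X (φ l) with hydef
  set s : ℕ → ℝ := fun l => τ (φ l) with hsdef
  set u : ℕ → EuclideanSpace ℝ (Fin n) := fun l => V (φ l) with hudef
  have hspos : ∀ l, 0 < s l := fun l => hτpos (φ l)
  have hs0 : Tendsto s atTop (nhds 0) := hτ0.comp hφ.tendsto_atTop
  have hylim : Tendsto y atTop (nhds xb) := hXlim.comp hφ.tendsto_atTop
  have hulim : Tendsto u atTop (nhds w) := hwlim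
  have hueq : ∀ l, u l = (s l)⁻¹ • (y l - xb) := fun l => rfl
  have hyeq : ∀ l, y l = xb + s l • u l := by
    intro l
    rw [hueq l, smul_inv_smul₀ (hspos l).ne']
    abel
  have hwK : w ∈ tangentConeOf K xb :=
    ⟨y, s, fun l => hXK (φ l), hspos, hylim, hs0, hulim⟩
  have hwne : w ≠ 0 := by
    intro h
    rw [mem_sphere_zero_iff_norm, h, norm_zero] at hwmem
    norm_num at hwmem
  -- inner product as a sum
  have hinner : ∀ a b : EuclideanSpace ℝ (Fin n),
      (inner ℝ a b : ℝ) = ∑ i, a i * b i := by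
    intro a b
    rw [PiLp.inner_apply]
    simp [RCLike.inner_apply, conj_trivial, mul_comm]
  -- coordinate convergence
  have hcoord : ∀ (z : ℕ → EuclideanSpace ℝ (Fin n)) (z0 : EuclideanSpace ℝ (Fin n))
      (i : Fin n), Tendsto z atTop (nhds z0) → Tendsto (fun l => z l i) atTop (nhds (z0 i)) := by
    intro z z0 i hz
    have := ((EuclideanSpace.proj (𝕜 := ℝ) i).continuous.tendsto z0).comp hz
    exact this
  have hycoord : ∀ l (i : Fin n), y l i = xb i + s l * u l i := by
    intro l i
    rw [hyeq l]
    rw [PiLp.add_apply, PiLp.smul_apply, smul_eq_mul]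
  -- first-order inequalities
  have hdualxb : ∀ z ∈ K, 0 ≤ (inner ℝ z (tApp A xb + q) : ℝ) :=
    fun z hz => ProperCone.mem_innerDual.1 hdual hz
  have h1 : ∀ l, 0 ≤ (inner ℝ (u l) (tApp A xb + q) : ℝ) := by
    intro l
    have hrw : (inner ℝ (u l) (tApp A xb + q) : ℝ)
        = (s l)⁻¹ * ((inner ℝ (y l) (tApp A xb + q) : ℝ) - inner ℝ xb (tApp A xb + q)) := by
      rw [hueq l, real_inner_smul_left, inner_sub_left]
    rw [hrw, hcomp]
    have h := hdualxb (y l) (hXK (φ l))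
    have : (0:ℝ) ≤ (inner ℝ (y l) (tApp A xb + q) : ℝ) - 0 := by linarith
    exact mul_nonneg (inv_nonneg.2 (hspos l).le) this
  have h2 : ∀ l, (inner ℝ (u l) (tApp A (y l) + q) : ℝ) ≤ 0 := by
    intro l
    obtain ⟨hyK, hydual, hycomp⟩ := hXsol (φ l)
    have hxbnn : 0 ≤ (inner ℝ xb (tApp A (y l) + q) : ℝ) :=
      ProperCone.mem_innerDual.1 hydual hxbK
    have hrw : (inner ℝ (u l) (tApp A (y l) + q) : ℝ)
        = (s l)⁻¹ * ((inner ℝ (y l) (tApp A (y l) + q) : ℝ) - inner ℝ xb (tApp A (y l) + q)) := by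
      rw [hueq l, real_inner_smul_left, inner_sub_left]
    rw [hrw, hycomp]
    have hle : (0:ℝ) - (inner ℝ xb (tApp A (y l) + q) : ℝ) ≤ 0 := by linarith
    have := mul_le_mul_of_nonneg_left hle (inv_nonneg.2 (hspos l).le)
    simpa using this
  -- limits of the first-order quantities
  have hlim1 : Tendsto (fun l => (inner ℝ (u l) (tApp A xb + q) : ℝ)) atTop
      (nhds (inner ℝ w (tApp A xb + q))) :=
    hulim.inner tendsto_const_nhds
  have hlim2 : Tendsto (fun l => (inner ℝ (u l) (tApp A (y l) + q) : ℝ)) atTop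
      (nhds (inner ℝ w (tApp A xb + q))) := by
    have hrw : ∀ l, (inner ℝ (u l) (tApp A (y l) + q) : ℝ)
        = ∑ i, u l i * ((∑ f : Fin (k+1) → Fin n, A i f * ∏ j, y l (f j)) + q i) := by
      intro l
      rw [hinner]
      refine Finset.sum_congr rfl fun i _ => ?_
      rw [PiLp.add_apply]
      rfl
    have hrw0 : (inner ℝ w (tApp A xb + q) : ℝ)
        = ∑ i, w i * ((∑ f : Fin (k+1) → Fin n, A i f * ∏ j, xb (f j)) + q i) := by
      rw [hinner]
      refine Finset.sum_congr rfl fun i _ => ?_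
      rw [PiLp.add_apply]
      rfl
    rw [hrw0]
    refine Tendsto.congr (fun l => (hrw l).symm) ?_
    refine tendsto_finset_sum _ fun i _ => ?_
    refine (hcoord u w i hulim).mul (Tendsto.add ?_ tendsto_const_nhds)
    refine tendsto_finset_sum _ fun f _ => ?_
    exact tendsto_const_nhds.mul (tendsto_finset_prod _ fun j _ => hcoord y xb (f j) hylim)
  have hfirst : (inner ℝ w (tApp A xb + q) : ℝ) = 0 := by
    have hge : 0 ≤ (inner ℝ w (tApp A xb + q) : ℝ) := ge_of_tendsto' hlim1 h1
    have hle : (inner ℝ w (tApp A xb + q) : ℝ) ≤ 0 := le_of_tendsto' hlim2 h2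
    linarith
  -- second-order quantity
  set Lim : ℝ := ∑ i, ∑ f : Fin (k+1) → Fin n, (w i * A i f) *
      ∑ j, (∏ j' ∈ Finset.univ.erase j, xb (f j')) * w (f j) with hLimdef
  have hD : ∀ l, (s l)⁻¹ *
      ((inner ℝ (u l) (tApp A (y l) + q) : ℝ) - (inner ℝ (u l) (tApp A xb + q) : ℝ)) ≤ 0 := by
    intro l
    have hle : (inner ℝ (u l) (tApp A (y l) + q) : ℝ)
        - (inner ℝ (u l) (tApp A xb + q) : ℝ) ≤ 0 := by
      have := h1 l; have := h2 l; linarith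
    have := mul_le_mul_of_nonneg_left hle (inv_nonneg.2 (hspos l).le)
    simpa using this
  have hDlim : Tendsto (fun l => (s l)⁻¹ *
      ((inner ℝ (u l) (tApp A (y l) + q) : ℝ) - (inner ℝ (u l) (tApp A xb + q) : ℝ))) atTop
      (nhds Lim) := by
    have hrw : ∀ l, (s l)⁻¹ *
        ((inner ℝ (u l) (tApp A (y l) + q) : ℝ) - (inner ℝ (u l) (tApp A xb + q) : ℝ))
        = ∑ i, ∑ f : Fin (k+1) → Fin n, (u l i * A i f) *
            ((s l)⁻¹ * ((∏ j, (xb (f j) + s l * u l (f j))) - ∏ j, xb (f j))) := by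
      intro l
      rw [hinner, hinner, ← Finset.sum_sub_distrib, Finset.mul_sum]
      refine Finset.sum_congr rfl fun i _ => ?_
      have hdiff : tApp A (y l) i - tApp A xb i
          = ∑ f : Fin (k+1) → Fin n,
              A i f * ((∏ j, (xb (f j) + s l * u l (f j))) - ∏ j, xb (f j)) := by
        show (∑ f : Fin (k+1) → Fin n, A i f * ∏ j, y l (f j))
            - (∑ f : Fin (k+1) → Fin n, A i f * ∏ j, xb (f j)) = _
        rw [← Finset.sum_sub_distrib]
        refine Finset.sum_congr rfl fun f _ => ?_
        rw [← mul_sub]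
        congr 1
        congr 1
        exact Finset.prod_congr rfl fun j _ => hycoord l (f j)
      have hstep : u l i * ((tApp A (y l) + q) i) - u l i * ((tApp A xb + q) i)
          = u l i * (tApp A (y l) i - tApp A xb i) := by
        rw [PiLp.add_apply, PiLp.add_apply]
        ring
      rw [hstep, hdiff, Finset.mul_sum, Finset.mul_sum]
      refine Finset.sum_congr rfl fun f _ => ?_
      ring
    refine Tendsto.congr (fun l => (hrw l).symm) ?_
    refine tendsto_finset_sum _ fun i _ => ?_
    refine tendsto_finset_sum _ fun f _ => ?_
    refine ((hcoord u w i hulim).mul tendsto_const_nhds).mul ?_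
    refine aux_prod_tendsto (fun j => xb (f j)) s (fun l j => u l (f j)) (fun j => w (f j))
      (fun l => (hspos l).ne') hs0 ?_
    rw [tendsto_pi_nhds]
    intro j
    exact hcoord u w (f j) hulim
  have hLimle : Lim ≤ 0 := le_of_tendsto' hDlim hD
  -- symmetry: Lim = (k+1) * quadForm A xb w
  have hquad : Lim = (k + 1) * quadForm A xb w := by
    have hPer : ∀ i : Fin n,
        (∑ f : Fin (k+1) → Fin n, (w i * A i f) *
          ∑ j, (∏ j' ∈ Finset.univ.erase j, xb (f j')) * w (f j))
        = (k+1 : ℝ) * (w i * ∑ f : Fin (k+1) → Fin n,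
            A i f * w (f 0) * ∏ jj : Fin k, xb (f jj.succ)) := by
      intro i
      calc (∑ f : Fin (k+1) → Fin n, (w i * A i f) *
              ∑ j, (∏ j' ∈ Finset.univ.erase j, xb (f j')) * w (f j))
          = ∑ f : Fin (k+1) → Fin n, ∑ j,
              (w i * A i f) * ((∏ j' ∈ Finset.univ.erase j, xb (f j')) * w (f j)) :=
            Finset.sum_congr rfl fun f _ => Finset.mul_sum _ _ _
        _ = ∑ j : Fin (k+1), ∑ f : Fin (k+1) → Fin n,
              (w i * A i f) * ((∏ j' ∈ Finset.univ.erase j, xb (f j')) * w (f j)) :=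
            Finset.sum_comm
        _ = ∑ _j : Fin (k+1), (w i * ∑ f : Fin (k+1) → Fin n,
              A i f * w (f 0) * ∏ jj : Fin k, xb (f jj.succ)) := by
            refine Finset.sum_congr rfl fun j _ => ?_
            rw [← aux_swap A hsym xb w i j, Finset.mul_sum]
            exact Finset.sum_congr rfl fun f _ => by ring
        _ = (k+1 : ℝ) * (w i * ∑ f : Fin (k+1) → Fin n,
              A i f * w (f 0) * ∏ jj : Fin k, xb (f jj.succ)) := by
            rw [Finset.sum_const, Finset.card_univ, Fintype.card_fin, nsmul_eq_mul]
            push_cast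
            ring
    have hquadForm : quadForm A xb w = ∑ i, w i * ∑ f : Fin (k+1) → Fin n,
        A i f * w (f 0) * ∏ jj : Fin k, xb (f jj.succ) := by
      show (∑ i, ∑ f : Fin (k+1) → Fin n,
          A i f * (w i * w (f 0) * ∏ jj : Fin k, xb (f jj.succ))) = _
      refine Finset.sum_congr rfl fun i _ => ?_
      rw [Finset.mul_sum]
      exact Finset.sum_congr rfl fun f _ => by ring
    calc Lim = ∑ i, (k+1 : ℝ) * (w i * ∑ f : Fin (k+1) → Fin n,
          A i f * w (f 0) * ∏ jj : Fin k, xb (f jj.succ)) := by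
          rw [hLimdef]
          exact Finset.sum_congr rfl fun i _ => hPer i
      _ = (k+1 : ℝ) * ∑ i, w i * ∑ f : Fin (k+1) → Fin n,
          A i f * w (f 0) * ∏ jj : Fin k, xb (f jj.succ) := by rw [Finset.mul_sum]
      _ = (k + 1) * quadForm A xb w := by rw [hquadForm]
  have hiq : (inner ℝ w (tApp A xb + q) : ℝ) = 0 := hfirst
  have hpos : 0 < quadForm A xb w := hsoc w hwK hiq hwne
  have : (0:ℝ) < (k + 1) * quadForm A xb w := by positivity
  rw [hquad] at hLimle
  linarith


end
end

section
/- Error bound / stability at a nondegenerate solution: let K be a closed convex cone, 𝒜̄ ∈ 𝒯_{m,n} sub-symmetric in its last m−1 indices, and x̄ ∈ SOL(K, q̄, 𝒜̄) satisfying the second-order condition v^⊤(𝒜̄x̄^{m-2})v > 0 for all nonzero v ∈ 𝒯(x̄,K) ∩ 𝕊(x̄). Then for every bounded open neighborhood 𝒩 of x̄ with SOL(K, q̄, 𝒜̄) ∩ cl(𝒩) = {x̄}, there is c > 0 such that for all q ∈ ℝ^n and 𝒜 ∈ 𝒯_{m,n}: sup{‖x − x̄‖ : x ∈ SOL(K,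 q, 𝒜) ∩ cl(𝒩)} ≤ c(‖q − q̄‖ + ‖𝒜 − 𝒜̄‖_F). -/
open scoped BigOperators
open Metric Filter

noncomputable section

namespace Aux19

variable {k n : ℕ}

lemma myInner (x y : EuclideanSpace ℝ (Fin n)) : (inner ℝ x y : ℝ) = ∑ i, x i * y i := by
  simp [PiLp.inner_apply, RCLike.inner_apply, conj_trivial, mul_comm]

lemma tApp_apply (A : Tensor k n) (x : EuclideanSpace ℝ (Fin n)) (i : Fin n) :
    tApp A x i = ∑ f : Fin k → Fin n, A i f * ∏ j, x (f j) := rfl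

def Gfun (A : Tensor (k+1) n) (xb : EuclideanSpace ℝ (Fin n))
    (p : ℝ × EuclideanSpace ℝ (Fin n)) : ℝ :=
  ∑ i, p.2 i * ∑ f : Fin (k+1) → Fin n, A i f *
    ∑ S ∈ (Finset.univ : Finset (Fin (k+1))).powerset.erase ∅,
      p.1 ^ (S.card - 1) * ((∏ j ∈ S, p.2 (f j)) * ∏ j ∈ Sᶜ, xb (f j))

lemma prod_expand (τ : ℝ) (a b : Fin (k+1) → ℝ) :
    ∏ j, (a j + τ * b j)
      = (∏ j, a j) + τ * ∑ S ∈ (Finset.univ : Finset (Fin (k+1))).powerset.erase ∅,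
          τ ^ (S.card - 1) * ((∏ j ∈ S, b j) * ∏ j ∈ Sᶜ, a j) := by
  have h : ∏ j, (a j + τ * b j) = ∏ j, ((fun j => τ * b j) j + a j) := by
    apply Finset.prod_congr rfl; intro j _; ring
  rw [h, Finset.prod_add, ← Finset.add_sum_erase _ _ (Finset.empty_mem_powerset _)]
  simp only [Finset.prod_empty, one_mul, Finset.sdiff_empty]
  rw [Finset.mul_sum]
  congr 1
  apply Finset.sum_congr rfl
  intro S hS
  have hcard : 1 ≤ S.card := by
    rcases Finset.mem_erase.mp hS with ⟨hne, _⟩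
    exact Finset.card_pos.mpr (Finset.nonempty_iff_ne_empty.mpr hne)
  rw [Finset.prod_mul_distrib, Finset.prod_const, Finset.compl_eq_univ_sdiff]
  have hp : τ ^ S.card = τ * τ ^ (S.card - 1) := by
    conv_lhs => rw [show S.card = (S.card - 1) + 1 from (Nat.sub_add_cancel hcard).symm]
    rw [pow_succ]; ring
  rw [hp]; ring

lemma distrib_helper {ι κ : Type*} [Fintype ι] [Fintype κ] (w : ι → ℝ) (a : ι → κ → ℝ)
    (P Q : κ → ℝ) (τ : ℝ) :
    ∑ i, w i * ∑ f, a i f * (P f + τ * Q f)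
      = (∑ i, w i * ∑ f, a i f * P f) + τ * ∑ i, w i * ∑ f, a i f * Q f := by
  rw [Finset.mul_sum, ← Finset.sum_add_distrib]
  apply Finset.sum_congr rfl; intro i _
  rw [Finset.mul_sum, Finset.mul_sum, Finset.mul_sum, Finset.mul_sum, ← Finset.sum_add_distrib]
  apply Finset.sum_congr rfl; intro f _; ring

lemma inner_tApp_expand (A : Tensor (k+1) n) (xb v : EuclideanSpace ℝ (Fin n)) (τ : ℝ) :
    (inner ℝ v (tApp A (xb + τ • v)) : ℝ)
      = (inner ℝ v (tApp A xb) : ℝ) + τ * Gfun A xb (τ, v) := by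
  have happ : ∀ (f : Fin (k+1) → Fin n) (j : Fin (k+1)),
      (xb + τ • v) (f j) = xb (f j) + τ * v (f j) := fun _ _ => by simp
  simp only [myInner, tApp_apply, Gfun, happ]
  have hexp : ∀ f : Fin (k+1) → Fin n,
      ∏ j, (xb (f j) + τ * v (f j))
        = (∏ j, xb (f j)) + τ * ∑ S ∈ (Finset.univ : Finset (Fin (k+1))).powerset.erase ∅,
            τ ^ (S.card - 1) * ((∏ j ∈ S, v (f j)) * ∏ j ∈ Sᶜ, xb (f j)) := fun f =>
    prod_expand τ (fun j => xb (f j)) (fun j => v (f j))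
  simp only [hexp]
  exact distrib_helper v A _ _ τ

lemma Gfun_continuous (A : Tensor (k+1) n) (xb : EuclideanSpace ℝ (Fin n)) :
    Continuous (Gfun A xb) := by
  unfold Gfun
  apply continuous_finset_sum; intro i _
  apply Continuous.mul (((continuous_apply i).comp (PiLp.continuous_ofLp 2 _)).comp continuous_snd)
  apply continuous_finset_sum; intro f _
  apply Continuous.mul continuous_const
  apply continuous_finset_sum; intro S _
  apply Continuous.mul (continuous_fst.pow _)
  exact Continuous.mul
    (continuous_finset_prod _ (fun j _ => ((continuous_apply (f j)).comp (PiLp.continuous_ofLp 2 _)).comp continuous_snd))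
    continuous_const

lemma sum_erase_singletons (g : Finset (Fin (k+1)) → ℝ)
    (hg : ∀ S ∈ (Finset.univ : Finset (Fin (k+1))).powerset.erase ∅, S.card ≠ 1 → g S = 0) :
    ∑ S ∈ (Finset.univ : Finset (Fin (k+1))).powerset.erase ∅, g S
      = ∑ j : Fin (k+1), g {j} := by
  have himg : (Finset.univ.image fun j : Fin (k+1) => ({j} : Finset (Fin (k+1))))
      ⊆ Finset.univ.powerset.erase ∅ := by
    intro S hS
    simp only [Finset.mem_image] at hS
    obtain ⟨j, -, rfl⟩ := hS
    simp [Finset.mem_erase]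
  rw [← Finset.sum_subset himg ?h0, Finset.sum_image ?inj]
  case h0 =>
    intro S hS hSn
    apply hg S hS
    intro hc
    rcases Finset.card_eq_one.mp hc with ⟨a, rfl⟩
    exact hSn (Finset.mem_image.mpr ⟨a, Finset.mem_univ a, rfl⟩)
  case inj =>
    intro a _ b _ h
    exact Finset.singleton_injective h

lemma prod_compl_singleton_swap (j : Fin (k+1)) (g : Fin (k+1) → ℝ) :
    ∏ j' ∈ ({j} : Finset (Fin (k+1)))ᶜ, g (Equiv.swap 0 j j')
      = ∏ j' ∈ ({0} : Finset (Fin (k+1)))ᶜ, g j' := by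
  apply Finset.prod_bij (fun a _ => Equiv.swap 0 j a)
  · intro a ha
    simp only [Finset.mem_compl, Finset.mem_singleton] at *
    intro hc
    exact ha ((Equiv.swap 0 j).injective (hc.trans (Equiv.swap_apply_right 0 j).symm))
  · intro a _ b _ h
    exact (Equiv.swap 0 j).injective h
  · intro b hb
    simp only [Finset.mem_compl, Finset.mem_singleton] at *
    refine ⟨Equiv.swap 0 j b, ?_, Equiv.swap_apply_self _ _ _⟩
    intro hc
    have h2 := congrArg (Equiv.swap 0 j) hc
    rw [Equiv.swap_apply_self, Equiv.swap_apply_right] at h2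
    exact hb h2
  · intros; rfl

lemma prod_compl_zero (g : Fin (k+1) → ℝ) :
    ∏ j' ∈ ({0} : Finset (Fin (k+1)))ᶜ, g j' = ∏ j : Fin k, g j.succ := by
  symm
  apply Finset.prod_bij (fun (a : Fin k) _ => a.succ)
  · intro a _; simp [Finset.mem_compl, Fin.succ_ne_zero]
  · intro a _ b _ h; exact Fin.succ_injective _ h
  · intro b hb
    have hb0 : b ≠ 0 := by simpa using hb
    exact ⟨b.pred hb0, Finset.mem_univ _, Fin.succ_pred b hb0⟩
  · intros; rfl

lemma sum_swap_reindex (A : Tensor (k+1) n) (hsym : SubSymmetric A)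
    (xb v : EuclideanSpace ℝ (Fin n)) (i : Fin n) (j : Fin (k+1)) :
    ∑ f : Fin (k+1) → Fin n, A i f * (v (f j) * ∏ j' ∈ ({j} : Finset (Fin (k+1)))ᶜ, xb (f j'))
      = ∑ f : Fin (k+1) → Fin n, A i f * (v (f 0) * ∏ j' : Fin k, xb (f j'.succ)) := by
  set σ := Equiv.swap (0 : Fin (k+1)) j with hσ
  have hbij : Function.Bijective (fun f : Fin (k+1) → Fin n => f ∘ σ) := by
    constructor
    · intro f g h
      funext a
      have := congrFun h (σ.symm a)
      simpa using this
    · intro g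
      refine ⟨g ∘ σ.symm, ?_⟩
      funext a
      simp
  symm
  apply Fintype.sum_bijective _ hbij
  intro f
  have h1 : A i (f ∘ σ) = A i f := hsym i f σ
  have h2 : (f ∘ σ) j = f 0 := by simp [hσ, Equiv.swap_apply_right]
  have h4 : ∏ j' ∈ ({j} : Finset (Fin (k+1)))ᶜ, xb ((f ∘ σ) j')
      = ∏ j' : Fin k, xb (f j'.succ) := by
    have := prod_compl_singleton_swap (k := k) j (fun a => xb (f a))
    calc ∏ j' ∈ ({j} : Finset (Fin (k+1)))ᶜ, xb ((f ∘ σ) j')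
        = ∏ j' ∈ ({j} : Finset (Fin (k+1)))ᶜ, (fun a => xb (f a)) (Equiv.swap 0 j j') := rfl
      _ = ∏ j' ∈ ({0} : Finset (Fin (k+1)))ᶜ, (fun a => xb (f a)) j' := this
      _ = ∏ j' : Fin k, xb (f j'.succ) := prod_compl_zero (fun a => xb (f a))
  rw [← h1, ← h2, ← h4]

lemma Gfun_zero (A : Tensor (k+1) n) (hsym : SubSymmetric A)
    (xb v : EuclideanSpace ℝ (Fin n)) :
    Gfun A xb (0, v) = ((k : ℝ) + 1) * quadForm A xb v := by
  unfold Gfun quadForm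
  have hT : ∀ f : Fin (k+1) → Fin n,
      ∑ S ∈ (Finset.univ : Finset (Fin (k+1))).powerset.erase ∅,
        (0 : ℝ) ^ (S.card - 1) * ((∏ j ∈ S, v (f j)) * ∏ j ∈ Sᶜ, xb (f j))
      = ∑ j : Fin (k+1), v (f j) * ∏ j' ∈ ({j} : Finset (Fin (k+1)))ᶜ, xb (f j') := by
    intro f
    rw [sum_erase_singletons]
    · apply Finset.sum_congr rfl
      intro j _
      simp [Finset.card_singleton]
    · intro S hS hc1
      have hcard : 1 ≤ S.card := by
        rcases Finset.mem_erase.mp hS with ⟨hne, -⟩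
        exact Finset.card_pos.mpr (Finset.nonempty_iff_ne_empty.mpr hne)
      have : 1 ≤ S.card - 1 := by omega
      rw [zero_pow (by omega : S.card - 1 ≠ 0)]
      ring
  simp only [hT]
  have hswap : ∀ i : Fin n,
      ∑ f : Fin (k+1) → Fin n, A i f *
          ∑ j : Fin (k+1), v (f j) * ∏ j' ∈ ({j} : Finset (Fin (k+1)))ᶜ, xb (f j')
        = ((k : ℝ) + 1) * ∑ f : Fin (k+1) → Fin n,
            A i f * (v (f 0) * ∏ j' : Fin k, xb (f j'.succ)) := by
    intro i
    have h1 : ∑ f : Fin (k+1) → Fin n, A i f *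
          ∑ j : Fin (k+1), v (f j) * ∏ j' ∈ ({j} : Finset (Fin (k+1)))ᶜ, xb (f j')
        = ∑ j : Fin (k+1), ∑ f : Fin (k+1) → Fin n,
            A i f * (v (f j) * ∏ j' ∈ ({j} : Finset (Fin (k+1)))ᶜ, xb (f j')) := by
      rw [Finset.sum_comm]
      apply Finset.sum_congr rfl
      intro f _
      rw [Finset.mul_sum]
    rw [h1]
    have h2 : ∀ j : Fin (k+1), ∑ f : Fin (k+1) → Fin n,
        A i f * (v (f j) * ∏ j' ∈ ({j} : Finset (Fin (k+1)))ᶜ, xb (f j'))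
        = ∑ f : Fin (k+1) → Fin n, A i f * (v (f 0) * ∏ j' : Fin k, xb (f j'.succ)) :=
      fun j => sum_swap_reindex A hsym xb v i j
    rw [Finset.sum_congr rfl (fun j _ => h2 j), Finset.sum_const]
    simp [Finset.card_univ, nsmul_eq_mul]
  simp only [hswap]
  simp only [Finset.mul_sum]
  apply Finset.sum_congr rfl
  intro i _
  apply Finset.sum_congr rfl
  intro f _
  ring


lemma frobDist_nonneg' (A B : Tensor k n) : 0 ≤ frobDist A B := Real.sqrt_nonneg _

lemma abs_entry_le_frobDist (A B : Tensor k n) (i : Fin n) (f : Fin k → Fin n) :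
    |A i f - B i f| ≤ frobDist A B := by
  rw [frobDist, ← Real.sqrt_sq_eq_abs]
  apply Real.sqrt_le_sqrt
  calc (A i f - B i f) ^ 2
      ≤ ∑ f' : Fin k → Fin n, (A i f' - B i f') ^ 2 :=
        Finset.single_le_sum (f := fun f' => (A i f' - B i f') ^ 2)
          (fun _ _ => sq_nonneg _) (Finset.mem_univ f)
    _ ≤ ∑ i', ∑ f' : Fin k → Fin n, (A i' f' - B i' f') ^ 2 :=
        Finset.single_le_sum (f := fun i' => ∑ f' : Fin k → Fin n, (A i' f' - B i' f') ^ 2)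
          (fun _ _ => Finset.sum_nonneg fun _ _ => sq_nonneg _) (Finset.mem_univ i)

lemma coord_le_norm (y : EuclideanSpace ℝ (Fin n)) (i : Fin n) : |y i| ≤ ‖y‖ := by
  rw [EuclideanSpace.norm_eq, ← Real.sqrt_sq_eq_abs]
  apply Real.sqrt_le_sqrt
  have : |y i| ^ 2 = ‖y i‖ ^ 2 := by rw [Real.norm_eq_abs]
  calc (y i) ^ 2 = ‖y i‖ ^ 2 := by rw [Real.norm_eq_abs, sq_abs]
    _ ≤ ∑ j, ‖y j‖ ^ 2 := Finset.single_le_sum (f := fun j => ‖y j‖ ^ 2)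
          (fun _ _ => sq_nonneg _) (Finset.mem_univ i)

lemma norm_le_of_coords (y : EuclideanSpace ℝ (Fin n)) (C : ℝ) (hC : 0 ≤ C)
    (h : ∀ i, |y i| ≤ C) : ‖y‖ ≤ Real.sqrt n * C := by
  rw [EuclideanSpace.norm_eq]
  have hs : Real.sqrt n * C = Real.sqrt ((n : ℝ) * C ^ 2) := by
    rw [Real.sqrt_mul (by positivity), Real.sqrt_sq hC]
  rw [hs]
  apply Real.sqrt_le_sqrt
  calc ∑ i, ‖y i‖ ^ 2 ≤ ∑ _i : Fin n, C ^ 2 := by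
        apply Finset.sum_le_sum
        intro i _
        rw [Real.norm_eq_abs]
        exact pow_le_pow_left₀ (abs_nonneg _) (h i) 2
    _ = (n : ℝ) * C ^ 2 := by
        rw [Finset.sum_const, Finset.card_univ, Fintype.card_fin, nsmul_eq_mul]

lemma tApp_sub_apply (A B : Tensor k n) (x : EuclideanSpace ℝ (Fin n)) (i : Fin n) :
    (tApp A x - tApp B x) i
      = ∑ f : Fin k → Fin n, (A i f - B i f) * ∏ j, x (f j) := by
  show tApp A x i - tApp B x i = _
  rw [tApp_apply, tApp_apply, ← Finset.sum_sub_distrib]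
  apply Finset.sum_congr rfl
  intro f _
  ring

lemma tApp_diff_le (A B : Tensor k n) (x : EuclideanSpace ℝ (Fin n)) (R : ℝ) (hR : 0 ≤ R)
    (hx : ∀ i, |x i| ≤ R) :
    ‖tApp A x - tApp B x‖
      ≤ Real.sqrt n * (((Fintype.card (Fin k → Fin n)) : ℝ) * R ^ k) * frobDist A B := by
  have hC : 0 ≤ ((Fintype.card (Fin k → Fin n)) : ℝ) * R ^ k * frobDist A B := by
    have := frobDist_nonneg' A B
    positivity
  have key : ∀ i, |(tApp A x - tApp B x) i|
      ≤ ((Fintype.card (Fin k → Fin n)) : ℝ) * R ^ k * frobDist A B := by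
    intro i
    rw [tApp_sub_apply]
    calc |∑ f : Fin k → Fin n, (A i f - B i f) * ∏ j, x (f j)|
        ≤ ∑ f : Fin k → Fin n, |(A i f - B i f) * ∏ j, x (f j)| :=
          Finset.abs_sum_le_sum_abs _ _
      _ ≤ ∑ _f : Fin k → Fin n, frobDist A B * R ^ k := by
          apply Finset.sum_le_sum
          intro f _
          rw [abs_mul]
          apply mul_le_mul (abs_entry_le_frobDist A B i f) ?_ (abs_nonneg _)
            (frobDist_nonneg' A B)
          rw [Finset.abs_prod]
          calc ∏ j, |x (f j)| ≤ ∏ _j : Fin k, R :=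
                Finset.prod_le_prod (fun _ _ => abs_nonneg _) (fun j _ => hx (f j))
            _ = R ^ k := by rw [Finset.prod_const, Finset.card_univ, Fintype.card_fin]
      _ = ((Fintype.card (Fin k → Fin n)) : ℝ) * R ^ k * frobDist A B := by
          rw [Finset.sum_const, Finset.card_univ, nsmul_eq_mul]
          ring
  have h := norm_le_of_coords _ _ hC key
  calc ‖tApp A x - tApp B x‖
      ≤ Real.sqrt n * (((Fintype.card (Fin k → Fin n)) : ℝ) * R ^ k * frobDist A B) := h
    _ = Real.sqrt n * (((Fintype.card (Fin k → Fin n)) : ℝ) * R ^ k) * frobDist A B := by ring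

lemma tApp_cont (A : Tensor k n) : Continuous fun x : EuclideanSpace ℝ (Fin n) => tApp A x := by
  unfold tApp
  apply (PiLp.continuous_toLp 2 _).comp
  apply continuous_pi
  intro i
  apply continuous_finset_sum
  intro f _
  exact continuous_const.mul (continuous_finset_prod _ fun j _ => (continuous_apply (f j)).comp (PiLp.continuous_ofLp 2 _))

end Aux19

set_option maxHeartbeats 2000000 in
/-- error bound / stability at a solution satisfying the
second-order condition. -/
theorem stmt19 {k n : ℕ} (K : Set (EuclideanSpace ℝ (Fin n)))
    (hKcl : IsClosed K) (hKconv : Convex ℝ K) (hKcone : IsConeSet K)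
    (qb : EuclideanSpace ℝ (Fin n)) (Ab : Tensor (k + 1) n)
    (hsym : SubSymmetric Ab)
    (xb : EuclideanSpace ℝ (Fin n)) (hxb : xb ∈ SOL K qb Ab)
    (hsoc : ∀ v ∈ tangentConeOf K xb,
      inner ℝ v (tApp Ab xb + qb) = (0 : ℝ) → v ≠ 0 → 0 < quadForm Ab xb v) :
    ∀ N : Set (EuclideanSpace ℝ (Fin n)), IsOpen N → Bornology.IsBounded N →
      xb ∈ N → SOL K qb Ab ∩ closure N = {xb} →
      ∃ c > (0 : ℝ), ∀ (q : EuclideanSpace ℝ (Fin n)) (A : Tensor (k + 1) n),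
        ∀ x ∈ SOL K q A ∩ closure N,
          ‖x - xb‖ ≤ c * (‖q - qb‖ + frobDist A Ab) := by
  intro N hNopen hNbd hxbN hsolN
  obtain ⟨hxbK, hwbdual, hxbw⟩ := hxb
  by_contra hcon
  push_neg at hcon
  choose q A x hxmem hgt using fun l : ℕ => hcon ((l : ℝ) + 1) (by positivity)
  have hxK : ∀ l, x l ∈ K := fun l => (hxmem l).1.1
  have hxN : ∀ l, x l ∈ closure N := fun l => (hxmem l).2
  have hwdual : ∀ l, tApp (A l) (x l) + q l ∈ ProperCone.innerDual K := fun l => (hxmem l).1.2.1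
  have hxw : ∀ l, (inner ℝ (x l) (tApp (A l) (x l) + q l) : ℝ) = 0 := fun l => (hxmem l).1.2.2
  set ε : ℕ → ℝ := fun l => ‖q l - qb‖ + frobDist (A l) Ab with hεdef
  set τ : ℕ → ℝ := fun l => ‖x l - xb‖ with hτdef
  have hεl : ∀ l, ε l = ‖q l - qb‖ + frobDist (A l) Ab := fun l => rfl
  have hτl : ∀ l, τ l = ‖x l - xb‖ := fun l => rfl
  have hgt' : ∀ l : ℕ, ((l : ℝ) + 1) * ε l < τ l := fun l => by
    rw [hεl l, hτl l]; exact hgt l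
  have hε0 : ∀ l, 0 ≤ ε l := fun l =>
    add_nonneg (norm_nonneg _) (Aux19.frobDist_nonneg' _ _)
  have hτpos : ∀ l, 0 < τ l := by
    intro l
    have h := hgt' l
    have h0 : 0 ≤ ((l : ℝ) + 1) * ε l := mul_nonneg (by positivity) (hε0 l)
    linarith
  obtain ⟨R, hR⟩ := isBounded_iff_forall_norm_le.mp hNbd.closure
  have hR0 : 0 ≤ R := le_trans (norm_nonneg xb) (hR xb (subset_closure hxbN))
  have hτle : ∀ l, τ l ≤ 2 * R := by
    intro l
    rw [hτl]
    calc ‖x l - xb‖ ≤ ‖x l‖ + ‖xb‖ := norm_sub_le _ _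
      _ ≤ R + R := add_le_add (hR _ (hxN l)) (hR xb (subset_closure hxbN))
      _ = 2 * R := by ring
  have hεle : ∀ l, ε l ≤ 2 * R / ((l : ℝ) + 1) := by
    intro l
    rw [le_div_iff₀ (by positivity : (0:ℝ) < (l : ℝ) + 1)]
    nlinarith [hgt' l, hτle l]
  have hdivto0 : ∀ D : ℝ, Tendsto (fun l : ℕ => D / ((l : ℝ) + 1)) atTop (nhds 0) := by
    intro D
    have h1 := (tendsto_const_div_atTop_nhds_zero_nat D).comp (tendsto_add_atTop_nat 1)
    have h2 : (fun l : ℕ => D / ((l : ℝ) + 1))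
        = (fun m : ℕ => D / (m : ℝ)) ∘ (fun a : ℕ => a + 1) := by
      funext l
      simp only [Function.comp_apply]
      push_cast
      ring
    rw [h2]
    exact h1
  have hεto0 : Tendsto ε atTop (nhds 0) := squeeze_zero hε0 hεle (hdivto0 (2 * R))
  have hqto : Tendsto q atTop (nhds qb) := by
    rw [tendsto_iff_norm_sub_tendsto_zero]
    apply squeeze_zero (fun l => norm_nonneg _) (fun l => ?_) hεto0
    rw [hεl]
    exact le_add_of_nonneg_right (Aux19.frobDist_nonneg' _ _)
  have hfroto : Tendsto (fun l => frobDist (A l) Ab) atTop (nhds 0) := by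
    apply squeeze_zero (fun l => Aux19.frobDist_nonneg' _ _) (fun l => ?_) hεto0
    rw [hεl]
    exact le_add_of_nonneg_left (norm_nonneg _)
  obtain ⟨xh, hxhN, φ, hφ, hxφ⟩ := hNbd.isCompact_closure.tendsto_subseq hxN
  have hfroφ : Tendsto (fun l => frobDist (A (φ l)) Ab) atTop (nhds 0) :=
    hfroto.comp hφ.tendsto_atTop
  have hqφ : Tendsto (fun l => q (φ l)) atTop (nhds qb) := hqto.comp hφ.tendsto_atTop
  have hcoordR : ∀ l i, |x l i| ≤ R := fun l i =>
    le_trans (Aux19.coord_le_norm _ i) (hR _ (hxN l))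
  set C : ℝ := Real.sqrt n * (((Fintype.card (Fin (k + 1) → Fin n)) : ℝ) * R ^ (k + 1))
    with hCdef
  have hC0 : 0 ≤ C := by rw [hCdef]; positivity
  have hdiffle : ∀ l, ‖tApp (A l) (x l) - tApp Ab (x l)‖ ≤ C * frobDist (A l) Ab := by
    intro l
    rw [hCdef]
    exact Aux19.tApp_diff_le (A l) Ab (x l) R hR0 (hcoordR l)
  have hdiffto : Tendsto (fun l => tApp (A (φ l)) (x (φ l)) - tApp Ab (x (φ l))) atTop
      (nhds 0) := by
    apply squeeze_zero_norm (fun l => hdiffle (φ l))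
    have := hfroφ.const_mul C
    simpa using this
  have htAb : Tendsto (fun l => tApp Ab (x (φ l))) atTop (nhds (tApp Ab xh)) :=
    ((Aux19.tApp_cont Ab).tendsto xh).comp hxφ
  have htA : Tendsto (fun l => tApp (A (φ l)) (x (φ l))) atTop (nhds (tApp Ab xh)) := by
    have h := htAb.add hdiffto
    rw [add_zero] at h
    convert h using 1
    funext l
    abel
  have hwφ : Tendsto (fun l => tApp (A (φ l)) (x (φ l)) + q (φ l)) atTop
      (nhds (tApp Ab xh + qb)) := htA.add hqφ
  have hxhK : xh ∈ K :=
    hKcl.mem_of_tendsto hxφ (Filter.Eventually.of_forall fun l => hxK (φ l))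
  have hxhdual : tApp Ab xh + qb ∈ ProperCone.innerDual K := by
    have h := (ProperCone.innerDual K).isClosed.mem_of_tendsto hwφ
      (Filter.Eventually.of_forall fun l => (hwdual (φ l) : _))
    exact h
  have hxhw : (inner ℝ xh (tApp Ab xh + qb) : ℝ) = 0 := by
    have h1 : Tendsto (fun l => (inner ℝ (x (φ l)) (tApp (A (φ l)) (x (φ l)) + q (φ l)) : ℝ))
        atTop (nhds (inner ℝ xh (tApp Ab xh + qb))) := hxφ.inner hwφ
    have h2 : (fun l => (inner ℝ (x (φ l)) (tApp (A (φ l)) (x (φ l)) + q (φ l)) : ℝ))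
        = fun _ => (0 : ℝ) := funext fun l => hxw (φ l)
    rw [h2] at h1
    exact (tendsto_nhds_unique tendsto_const_nhds h1).symm
  have hxh : xh = xb := by
    have hmem : xh ∈ SOL K qb Ab ∩ closure N := ⟨⟨hxhK, hxhdual, hxhw⟩, hxhN⟩
    rw [hsolN] at hmem
    exact hmem
  rw [hxh] at hxφ hwφ
  set v : ℕ → EuclideanSpace ℝ (Fin n) := fun l => (τ l)⁻¹ • (x l - xb) with hvdef
  have hvl : ∀ l, v l = (τ l)⁻¹ • (x l - xb) := fun l => rfl
  have hv1 : ∀ l, ‖v l‖ = 1 := by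
    intro l
    rw [hvl, norm_smul, norm_inv, Real.norm_eq_abs, abs_of_pos (hτpos l), ← hτl]
    exact inv_mul_cancel₀ (ne_of_gt (hτpos l))
  obtain ⟨vh, hvhB, ψ, hψ, hvψ⟩ :=
    (isCompact_closedBall (0 : EuclideanSpace ℝ (Fin n)) 1).tendsto_subseq
      (x := fun l => v (φ l)) (fun l => mem_closedBall_zero_iff.mpr (le_of_eq (hv1 (φ l))))
  have hxρ : Tendsto (fun l => x (φ (ψ l))) atTop (nhds xb) := hxφ.comp hψ.tendsto_atTop
  have hτρ : Tendsto (fun l => τ (φ (ψ l))) atTop (nhds 0) := by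
    have h : Tendsto (fun l => x (φ (ψ l)) - xb) atTop (nhds (xb - xb)) :=
      hxρ.sub (tendsto_const_nhds (x := xb))
    rw [sub_self] at h
    have h2 := h.norm
    rw [norm_zero] at h2
    have h3 : (fun l => ‖x (φ (ψ l)) - xb‖) = fun l => τ (φ (ψ l)) := by
      funext l; rw [hτl]
    rwa [h3] at h2
  have hvρ : Tendsto (fun l => v (φ (ψ l))) atTop (nhds vh) := hvψ
  have hvh1 : ‖vh‖ = 1 := by
    have h1 := hvρ.norm
    have h2 : (fun l => ‖v (φ (ψ l))‖) = fun _ => (1 : ℝ) := funext fun l => hv1 _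
    rw [h2] at h1
    exact tendsto_nhds_unique h1 tendsto_const_nhds
  have hvh0 : vh ≠ 0 := by
    intro h
    rw [h, norm_zero] at hvh1
    norm_num at hvh1
  have hvtan : vh ∈ tangentConeOf K xb :=
    ⟨fun l => x (φ (ψ l)), fun l => τ (φ (ψ l)), fun l => hxK _, fun l => hτpos _,
      hxρ, hτρ, hvρ⟩
  have hmemdual : ∀ y ∈ ProperCone.innerDual K, ∀ z ∈ K, (0 : ℝ) ≤ inner ℝ z y := by
    intro y hy z hz
    exact (ProperCone.mem_innerDual.mp hy) hz
  have h1 : ∀ l, (0 : ℝ) ≤ inner ℝ (v l) (tApp Ab xb + qb) := by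
    intro l
    rw [hvl]
    rw [real_inner_smul_left]
    apply mul_nonneg (inv_nonneg.mpr (hτpos l).le)
    rw [inner_sub_left, hxbw, sub_zero]
    exact hmemdual _ hwbdual (x l) (hxK l)
  have h2 : ∀ l, (inner ℝ (v l) (tApp (A l) (x l) + q l) : ℝ) ≤ 0 := by
    intro l
    rw [hvl]
    rw [real_inner_smul_left]
    apply mul_nonpos_of_nonneg_of_nonpos (inv_nonneg.mpr (hτpos l).le)
    rw [inner_sub_left, hxw l, zero_sub]
    exact neg_nonpos.mpr (hmemdual _ (hwdual l) xb hxbK)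
  have hwρ : Tendsto (fun l => tApp (A (φ (ψ l))) (x (φ (ψ l))) + q (φ (ψ l))) atTop
      (nhds (tApp Ab xb + qb)) := hwφ.comp hψ.tendsto_atTop
  have hlim1 : (0 : ℝ) ≤ inner ℝ vh (tApp Ab xb + qb) :=
    le_of_tendsto_of_tendsto' tendsto_const_nhds (hvρ.inner tendsto_const_nhds)
      (fun l => h1 (φ (ψ l)))
  have hlim2 : (inner ℝ vh (tApp Ab xb + qb) : ℝ) ≤ 0 :=
    le_of_tendsto_of_tendsto' (hvρ.inner hwρ) tendsto_const_nhds
      (fun l => h2 (φ (ψ l)))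
  have hvwb : (inner ℝ vh (tApp Ab xb + qb) : ℝ) = 0 := le_antisymm hlim2 hlim1
  have hquad : 0 < quadForm Ab xb vh := hsoc vh hvtan hvwb hvh0
  -- key inequality
  have hkey : ∀ l, Aux19.Gfun Ab xb (τ l, v l) ≤ max C 1 / ((l : ℝ) + 1) := by
    intro l
    have hτ0 := hτpos l
    have hxl : xb + τ l • v l = x l := by
      rw [hvl, smul_inv_smul₀ (ne_of_gt hτ0)]
      abel
    have hexp := Aux19.inner_tApp_expand Ab xb (v l) (τ l)
    rw [hxl] at hexp
    have e1 : (inner ℝ (v l) (tApp (A l) (x l) + q l) : ℝ)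
        = inner ℝ (v l) (tApp (A l) (x l)) + inner ℝ (v l) (q l) := inner_add_right _ _ _
    have e2 : (inner ℝ (v l) (tApp Ab xb + qb) : ℝ)
        = inner ℝ (v l) (tApp Ab xb) + inner ℝ (v l) qb := inner_add_right _ _ _
    have e3 : (inner ℝ (v l) (tApp (A l) (x l) - tApp Ab (x l)) : ℝ)
        = inner ℝ (v l) (tApp (A l) (x l)) - inner ℝ (v l) (tApp Ab (x l)) :=
      inner_sub_right _ _ _
    have e4 : (inner ℝ (v l) (q l - qb) : ℝ)
        = inner ℝ (v l) (q l) - inner ℝ (v l) qb := inner_sub_right _ _ _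
    have hb1 : (inner ℝ (v l) (tApp (A l) (x l) + q l) : ℝ)
        - inner ℝ (v l) (tApp Ab xb + qb) ≤ 0 := sub_nonpos.mpr (le_trans (h2 l) (h1 l))
    have hb2 : -(inner ℝ (v l) (tApp (A l) (x l) - tApp Ab (x l)) : ℝ)
        ≤ C * frobDist (A l) Ab := by
      have habs := abs_real_inner_le_norm (v l) (tApp (A l) (x l) - tApp Ab (x l))
      rw [hv1 l, one_mul] at habs
      calc -(inner ℝ (v l) (tApp (A l) (x l) - tApp Ab (x l)) : ℝ)
          ≤ |(inner ℝ (v l) (tApp (A l) (x l) - tApp Ab (x l)) : ℝ)| := neg_le_abs _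
        _ ≤ ‖tApp (A l) (x l) - tApp Ab (x l)‖ := habs
        _ ≤ C * frobDist (A l) Ab := hdiffle l
    have hb3 : -(inner ℝ (v l) (q l - qb) : ℝ) ≤ ‖q l - qb‖ := by
      have habs := abs_real_inner_le_norm (v l) (q l - qb)
      rw [hv1 l, one_mul] at habs
      calc -(inner ℝ (v l) (q l - qb) : ℝ) ≤ |(inner ℝ (v l) (q l - qb) : ℝ)| := neg_le_abs _
        _ ≤ ‖q l - qb‖ := habs
    have hsum : τ l * Aux19.Gfun Ab xb (τ l, v l)
        ≤ C * frobDist (A l) Ab + ‖q l - qb‖ := by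
      rw [e1, e2] at hb1
      rw [e3] at hb2
      rw [e4] at hb3
      linarith [hexp]
    have hD : C * frobDist (A l) Ab + ‖q l - qb‖ ≤ max C 1 * ε l := by
      rw [hεl]
      have hf := Aux19.frobDist_nonneg' (A l) Ab
      have hm1 := le_max_left C 1
      have hm2 := le_max_right C 1
      have hq0 := norm_nonneg (q l - qb)
      nlinarith
    have hεle' : ε l ≤ τ l / ((l : ℝ) + 1) := by
      rw [le_div_iff₀ (by positivity : (0:ℝ) < (l : ℝ) + 1)]
      have h := hgt' l
      linarith [mul_comm (ε l) ((l : ℝ) + 1)]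
    have hmax0 : (0 : ℝ) ≤ max C 1 := le_trans zero_le_one (le_max_right C 1)
    have hτG : τ l * Aux19.Gfun Ab xb (τ l, v l) ≤ τ l * (max C 1 / ((l : ℝ) + 1)) := by
      calc τ l * Aux19.Gfun Ab xb (τ l, v l) ≤ max C 1 * ε l := le_trans hsum hD
        _ ≤ max C 1 * (τ l / ((l : ℝ) + 1)) := mul_le_mul_of_nonneg_left hεle' hmax0
        _ = τ l * (max C 1 / ((l : ℝ) + 1)) := by ring
    exact le_of_mul_le_mul_left hτG hτ0
  have hGtend : Tendsto (fun l => Aux19.Gfun Ab xb (τ (φ (ψ l)), v (φ (ψ l)))) atTop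
      (nhds (Aux19.Gfun Ab xb (0, vh))) :=
    ((Aux19.Gfun_continuous Ab xb).tendsto (0, vh)).comp (hτρ.prodMk_nhds hvρ)
  have hbound : ∀ l, Aux19.Gfun Ab xb (τ (φ (ψ l)), v (φ (ψ l)))
      ≤ max C 1 / ((l : ℝ) + 1) := by
    intro l
    refine le_trans (hkey (φ (ψ l))) ?_
    have hge : (l : ℝ) + 1 ≤ ((φ (ψ l) : ℕ) : ℝ) + 1 := by
      have h1 : l ≤ ψ l := hψ.le_apply
      have h2 : ψ l ≤ φ (ψ l) := hφ.le_apply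
      have : (l : ℝ) ≤ ((φ (ψ l) : ℕ) : ℝ) := by exact_mod_cast le_trans h1 h2
      linarith
    have hmax0 : (0 : ℝ) ≤ max C 1 := le_trans zero_le_one (le_max_right C 1)
    gcongr
  have hfinal : Aux19.Gfun Ab xb (0, vh) ≤ 0 :=
    le_of_tendsto_of_tendsto' hGtend (hdivto0 (max C 1)) hbound
  rw [Aux19.Gfun_zero Ab hsym xb vh] at hfinal
  have hpos : (0 : ℝ) < ((k : ℝ) + 1) * quadForm Ab xb vh :=
    mul_pos (by positivity) hquad
  linarith


end
end
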